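/- arXiv:2002.09071 — 10 statements merged into one kernel-verified Lean document; each statement's English description precedes it below -/
import Mathlib

section
/- Let T be a finite tree with vertex set V, rooted at a vertex ρ ∈ V, with every edge directed toward the root (so every vertex i ≠ ρ has a unique parent and d_out(i) = 1, while d_out(ρ) = 0; d_in(i) denotes the number of children of i). Let X be a finite set, M a real matrix indexed by X × X, and S ∈ ℝ^X a vector with S_σ ≠ 0 for all σ ∈ X, satisfying the eigenvector equation ∑_{σ'} M_{σ,σ'} S_{σ'} = λ S_σ for all σ ∈ X. Then for every fixed value σ̃ ∈ X, the sum over all maps σ : V → X with σ_ρ = σ̃ of the product ( ∏_{directed edges (i→j)} M_{σ_j, σ_i} ) · ( ∏_{i ∈ V} S_{σ_i}^{d_out(i) − d_in(i)} ) equals λ^{|V| − 1}, where negative powers of S_{σ_i} denote inverses in ℝ. -/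
open Finset

section Aux

variable {V X : Type*} [Fintype V] [DecidableEq V] [Fintype X] [DecidableEq X]

lemma sum_update_split (ρ ℓ : V) (hℓ : ℓ ≠ ρ) (σt x0 : X) (F : (V → X) → ℝ) :
    ∑ σ ∈ univ.filter (fun σ : V → X => σ ρ = σt), F σ
      = ∑ σ ∈ univ.filter (fun σ : V → X => σ ρ = σt ∧ σ ℓ = x0),
          ∑ x : X, F (Function.update σ ℓ x) := by
  rw [← Finset.sum_product']
  refine Finset.sum_nbij' (i := fun σ => (Function.update σ ℓ x0, σ ℓ))
    (j := fun p => Function.update p.1 ℓ p.2) ?_ ?_ ?_ ?_ ?_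
  · intro σ hσ
    simp only [mem_filter, mem_univ, true_and] at hσ
    simp only [Finset.mem_product, mem_filter, mem_univ, true_and]
    refine ⟨⟨?_, by simp⟩, trivial⟩
    rw [Function.update_of_ne (Ne.symm hℓ)]; exact hσ
  · intro p hp
    simp only [Finset.mem_product, mem_filter, mem_univ, true_and] at hp
    simp only [mem_filter, mem_univ, true_and]
    rw [Function.update_of_ne (Ne.symm hℓ)]; exact hp.1.1
  · intro σ hσ
    simp [Function.update_idem, Function.update_eq_self]
  · intro p hp
    simp only [Finset.mem_product, mem_filter, mem_univ, true_and] at hp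
    simp only [Function.update_idem, Function.update_self]
    rw [show x0 = p.1 ℓ from hp.1.2.symm, Function.update_eq_self]
  · intro σ hσ
    simp [Function.update_idem, Function.update_eq_self]

lemma card_filter_eval (ρ : V) (σt : X) :
    (univ.filter (fun σ : V → X => σ ρ = σt)).card
      = Fintype.card X ^ (Fintype.card V - 1) := by
  rw [← Fintype.card_subtype]
  have e : {σ : V → X // σ ρ = σt} ≃ ({i : V // i ≠ ρ} → X) :=
    { toFun := fun σ i => σ.1 i.1
      invFun := fun g => ⟨fun j => if h : j = ρ then σt else g ⟨j, h⟩, by simp⟩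
      left_inv := by
        rintro ⟨σ, hσ⟩
        ext j
        by_cases h : j = ρ <;> simp [h, hσ]
      right_inv := by
        intro g
        ext i
        simp [i.2] }
  rw [Fintype.card_congr e, Fintype.card_fun, Fintype.card_subtype_compl,
    Fintype.card_subtype_eq]

lemma aux_sum (ρ : V) (par : V → V) (hpar : par ρ = ρ)
    (htree : ∀ i : V, ∃ n : ℕ, par^[n] i = ρ)
    (f : X → X → ℝ) (c : ℝ) (hf : ∀ a, ∑ b, f a b = c) (σt : X) :
    ∀ B : Finset V, ρ ∈ B → (∀ i ∈ B, par i ∈ B) →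
      ∑ σ ∈ univ.filter (fun σ : V → X => σ ρ = σt),
        ∏ i ∈ B.erase ρ, f (σ (par i)) (σ i)
      = c ^ (B.card - 1) * (Fintype.card X : ℝ) ^ (Fintype.card V - B.card) := by
  have hXcard : (Fintype.card X : ℝ) ≠ 0 := by
    have : 0 < Fintype.card X := @Fintype.card_pos _ _ ⟨σt⟩
    positivity
  obtain ⟨depth, hdepthspec⟩ : ∃ d : V → ℕ,
      ∀ i, par^[d i] i = ρ ∧ ∀ m, par^[m] i = ρ → d i ≤ m :=
    ⟨fun i => Nat.find (htree i),
      fun i => ⟨Nat.find_spec (htree i), fun m hm => Nat.find_le hm⟩⟩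
  intro B
  induction B using Finset.strongInduction with
  | _ B ih =>
  intro hρB hparB
  by_cases hB : B.erase ρ = ∅
  · have hB1 : B = {ρ} := by
      apply Finset.eq_singleton_iff_unique_mem.mpr
      refine ⟨hρB, fun x hx => ?_⟩
      by_contra hxρ
      exact (Finset.notMem_empty x) (hB ▸ Finset.mem_erase.mpr ⟨hxρ, hx⟩)
    subst hB1
    simp only [Finset.erase_singleton, Finset.prod_empty, Finset.sum_const,
      Finset.card_singleton, nsmul_eq_mul, mul_one, pow_zero, one_mul]
    rw [card_filter_eval]
    push_cast [Nat.cast_pow]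
    ring
  · -- find a leaf ℓ of B
    have hne : (B.erase ρ).Nonempty := Finset.nonempty_of_ne_empty hB
    classical
    obtain ⟨ℓ, hℓmem, hmax⟩ :=
      Finset.exists_max_image (B.erase ρ) depth hne
    have hℓρ : ℓ ≠ ρ := (Finset.mem_erase.mp hℓmem).1
    have hℓB : ℓ ∈ B := (Finset.mem_erase.mp hℓmem).2
    have hdepth : ∀ j : V, j ≠ ρ → depth (par j) < depth j := by
      intro j hj
      have h0 : depth j ≠ 0 := by
        intro h
        have hs := (hdepthspec j).1
        rw [h] at hs
        exact hj hs
      obtain ⟨m, hm⟩ := Nat.exists_eq_succ_of_ne_zero h0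
      have hsp : par^[m] (par j) = ρ := by
        have hs := (hdepthspec j).1
        rw [hm, Function.iterate_succ_apply] at hs
        exact hs
      have := (hdepthspec (par j)).2 m hsp
      omega
    have hleaf : ∀ j ∈ B, par j ≠ ℓ := by
      intro j hjB hpj
      by_cases hjρ : j = ρ
      · subst hjρ
        rw [hpar] at hpj
        exact hℓρ hpj.symm
      · have h1 := hdepth j hjρ
        have h2 := hmax j (Finset.mem_erase.mpr ⟨hjρ, hjB⟩)
        rw [hpj] at h1
        omega
    set B' := B.erase ℓ with hB'def
    have hρB' : ρ ∈ B' := Finset.mem_erase.mpr ⟨Ne.symm hℓρ, hρB⟩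
    have hparB' : ∀ i ∈ B', par i ∈ B' := by
      intro i hi
      have hiB : i ∈ B := Finset.mem_of_mem_erase hi
      exact Finset.mem_erase.mpr ⟨hleaf i hiB, hparB i hiB⟩
    have hIH := ih B' (Finset.erase_ssubset hℓB) hρB' hparB'
    set G : (V → X) → ℝ := fun σ => ∏ i ∈ B'.erase ρ, f (σ (par i)) (σ i) with hGdef
    have hGupdate : ∀ (σ : V → X) (x : X), G (Function.update σ ℓ x) = G σ := by
      intro σ x
      apply Finset.prod_congr rfl
      intro i hi
      have hiB : i ∈ B := Finset.mem_of_mem_erase (Finset.mem_of_mem_erase hi)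
      have hiℓ : i ≠ ℓ := (Finset.mem_erase.mp (Finset.mem_of_mem_erase hi)).1
      rw [Function.update_of_ne hiℓ, Function.update_of_ne (hleaf i hiB)]
    have hprod : ∀ σ : V → X,
        ∏ i ∈ B.erase ρ, f (σ (par i)) (σ i) = f (σ (par ℓ)) (σ ℓ) * G σ := by
      intro σ
      rw [hGdef]
      rw [Finset.erase_right_comm]
      exact (Finset.mul_prod_erase _ _ hℓmem).symm
    -- main computation
    have key1 : ∑ σ ∈ univ.filter (fun σ : V → X => σ ρ = σt),
        ∏ i ∈ B.erase ρ, f (σ (par i)) (σ i)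
        = c * ∑ σ ∈ univ.filter (fun σ : V → X => σ ρ = σt ∧ σ ℓ = σt), G σ := by
      rw [sum_update_split ρ ℓ hℓρ σt σt]
      rw [Finset.mul_sum]
      apply Finset.sum_congr rfl
      intro σ hσ
      have : ∀ x : X, (∏ i ∈ B.erase ρ,
          f (Function.update σ ℓ x (par i)) (Function.update σ ℓ x i))
          = f (σ (par ℓ)) x * G σ := by
        intro x
        rw [hprod, hGupdate, Function.update_self,
          Function.update_of_ne (hleaf ℓ hℓB)]
      simp only [this]
      rw [← Finset.sum_mul, hf]
    have key2 : ∑ σ ∈ univ.filter (fun σ : V → X => σ ρ = σt), G σ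
        = (Fintype.card X : ℝ)
          * ∑ σ ∈ univ.filter (fun σ : V → X => σ ρ = σt ∧ σ ℓ = σt), G σ := by
      rw [sum_update_split ρ ℓ hℓρ σt σt]
      rw [Finset.mul_sum]
      apply Finset.sum_congr rfl
      intro σ hσ
      simp [hGupdate, Finset.sum_const, Finset.card_univ, nsmul_eq_mul]
    have hcard' : B'.card = B.card - 1 := Finset.card_erase_of_mem hℓB
    have hB2 : 2 ≤ B.card := Finset.one_lt_card.mpr ⟨ℓ, hℓB, ρ, hρB, hℓρ⟩
    have hBV : B.card ≤ Fintype.card V := Finset.card_le_univ B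
    rw [key1]
    have hT : (Fintype.card X : ℝ)
        * ∑ σ ∈ univ.filter (fun σ : V → X => σ ρ = σt ∧ σ ℓ = σt), G σ
        = c ^ (B'.card - 1) * (Fintype.card X : ℝ) ^ (Fintype.card V - B'.card) := by
      rw [← key2]; exact hIH
    apply mul_right_cancel₀ hXcard
    calc c * (∑ σ ∈ univ.filter (fun σ : V → X => σ ρ = σt ∧ σ ℓ = σt), G σ)
          * (Fintype.card X : ℝ)
        = c * ((Fintype.card X : ℝ)
            * ∑ σ ∈ univ.filter (fun σ : V → X => σ ρ = σt ∧ σ ℓ = σt), G σ) := by ring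
      _ = c * (c ^ (B'.card - 1) * (Fintype.card X : ℝ) ^ (Fintype.card V - B'.card)) := by
            rw [hT]
      _ = c ^ (B.card - 1) * (Fintype.card X : ℝ) ^ (Fintype.card V - B.card)
            * (Fintype.card X : ℝ) := by
            rw [hcard']
            have h1 : B.card - 1 - 1 + 1 = B.card - 1 := by omega
            have h2 : Fintype.card V - (B.card - 1)
                = (Fintype.card V - B.card) + 1 := by omega
            rw [h2, pow_succ, ← h1, pow_succ, h1]
            ring

end Aux

/-- Lemma B.1 of the paper. Let `T` be a finite tree with vertex set `V`,
rooted at `ρ`, with every edge directed toward the root: each vertex `i ≠ ρ` has a unique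
parent `par i` (and iterating the parent map from any vertex reaches the root).
`d_out i = 1` for `i ≠ ρ` and `d_out ρ = 0`; `d_in i` is the number of children of `i`.
If `M` is a real matrix indexed by a finite set `X` and `S` an eigenvector of `M` with
eigenvalue `λ`, all of whose entries are nonzero, then for every `σ̃ ∈ X` the sum over all
maps `σ : V → X` with `σ ρ = σ̃` of
`(∏_{edges i → par i} M (σ (par i)) (σ i)) * (∏ i, S (σ i) ^ (d_out i - d_in i))`
equals `λ ^ (|V| - 1)`. -/
theorem rooted_tree_eigenvector_sum
    {V X : Type*} [Fintype V] [DecidableEq V] [Fintype X] [DecidableEq X]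
    (ρ : V) (par : V → V) (hpar : par ρ = ρ)
    (htree : ∀ i : V, ∃ n : ℕ, par^[n] i = ρ)
    (M : X → X → ℝ) (S : X → ℝ) (hS : ∀ σ, S σ ≠ 0) (lam : ℝ)
    (heig : ∀ σ, ∑ σ', M σ σ' * S σ' = lam * S σ)
    (σt : X) :
    ∑ σ ∈ Finset.univ.filter (fun σ : V → X => σ ρ = σt),
      (∏ i ∈ Finset.univ.filter (fun i : V => i ≠ ρ), M (σ (par i)) (σ i)) *
      (∏ i : V, S (σ i) ^
        (((if i = ρ then 0 else 1) : ℤ)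
          - ((Finset.univ.filter (fun j : V => j ≠ ρ ∧ par j = i)).card : ℤ)))
    = lam ^ (Fintype.card V - 1) := by

  classical
  set f : X → X → ℝ := fun a b => M a b * S b * (S a)⁻¹ with hfdef
  have hf : ∀ a, ∑ b, f a b = lam := by
    intro a
    simp only [hfdef]
    rw [← Finset.sum_mul, heig, mul_assoc, mul_inv_cancel₀ (hS a), mul_one]
  have hmain := aux_sum ρ par hpar htree f lam hf σt Finset.univ (mem_univ ρ)
    (fun i _ => mem_univ (par i))
  rw [Finset.card_univ, Nat.sub_self, pow_zero, mul_one] at hmain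
  rw [← hmain]
  apply Finset.sum_congr rfl
  intro σ hσ
  have hfilter : Finset.univ.filter (fun i : V => i ≠ ρ) = Finset.univ.erase ρ :=
    Finset.filter_ne' _ _
  rw [hfilter]
  -- rewrite the zpow product
  have h2 : (∏ i : V, S (σ i) ^
        (((if i = ρ then 0 else 1) : ℤ)
          - ((Finset.univ.filter (fun j : V => j ≠ ρ ∧ par j = i)).card : ℤ)))
      = (∏ i ∈ Finset.univ.erase ρ, S (σ i))
        * ∏ j ∈ Finset.univ.erase ρ, (S (σ (par j)))⁻¹ := by
    have step1 : ∀ i : V, S (σ i) ^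
        (((if i = ρ then 0 else 1) : ℤ)
          - ((Finset.univ.filter (fun j : V => j ≠ ρ ∧ par j = i)).card : ℤ))
        = (if i = ρ then 1 else S (σ i))
          * ((S (σ i))⁻¹) ^ ((Finset.univ.filter (fun j : V => j ≠ ρ ∧ par j = i)).card) := by
      intro i
      rw [zpow_sub₀ (hS _), div_eq_mul_inv]
      congr 1
      · split <;> simp
      · rw [← inv_zpow, zpow_natCast]
    simp only [step1]
    rw [Finset.prod_mul_distrib]
    congr 1
    · rw [← hfilter, Finset.prod_filter]
      apply Finset.prod_congr rfl
      intro i _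
      by_cases h : i = ρ <;> simp [h]
    · rw [← hfilter]
      have : ∀ i : V, Finset.univ.filter (fun j : V => j ≠ ρ ∧ par j = i)
          = (Finset.univ.filter (fun j : V => j ≠ ρ)).filter (fun j => par j = i) := by
        intro i; rw [Finset.filter_filter]
      simp only [this]
      rw [← Finset.prod_fiberwise' (Finset.univ.filter (fun j : V => j ≠ ρ)) par
        (fun x => (S (σ x))⁻¹)]
      apply Finset.prod_congr rfl
      intro j _
      rw [Finset.prod_const]
  rw [h2, hfdef]
  rw [Finset.prod_mul_distrib, Finset.prod_mul_distrib]
  ring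
end

section
/- Let T be a finite tree with vertex set V and edge set E, and let d(i) denote the degree of vertex i in T. Let X be a finite set, M a real symmetric matrix indexed by X × X, and S ∈ ℝ^X a vector with S_σ ≠ 0 for all σ ∈ X, satisfying ∑_{σ'} M_{σ,σ'} S_{σ'} = λ S_σ for all σ ∈ X. Then for every choice of root vertex ρ ∈ V and every fixed value σ̃ ∈ X, the sum over all maps σ : V → X with σ_ρ = σ̃ of ( ∏_{(ij) ∈ E} M_{σ_i, σ_j} ) · ( ∏_{i ∈ V} S_{σ_i}^{2 − d(i)} ) equals S_{σ̃}^2 · λ^{|V| − 1}; in particular the result is independent of the choice of root ρ. -/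
open Finset

lemma sum_update_aux {V X : Type*} [Fintype V] [DecidableEq V] [Fintype X] [DecidableEq X]
    (ρ : V) (σt : X) (i : V) (hi : i ≠ ρ) (z₀ : X) (F : (V → X) → X → ℝ)
    (hF : ∀ σ x y, F (Function.update σ i x) y = F σ y) :
    ∑ σ ∈ univ.filter (fun σ : V → X => σ ρ = σt), F σ (σ i)
    = ∑ σ ∈ univ.filter (fun σ : V → X => σ ρ = σt ∧ σ i = z₀), ∑ x : X, F σ x := by
  rw [← Finset.sum_product']
  refine Finset.sum_nbij' (fun σ => (Function.update σ i z₀, σ i))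
    (fun q => Function.update q.1 i q.2) ?_ ?_ ?_ ?_ ?_
  · intro σ hσ
    simp only [mem_filter, mem_univ, true_and] at hσ ⊢
    rw [Finset.mem_product]
    refine ⟨?_, Finset.mem_univ _⟩
    simp [Function.update_of_ne (Ne.symm hi), hσ]
  · intro q hq
    rw [Finset.mem_product] at hq
    simp only [mem_filter, mem_univ, true_and] at hq ⊢
    rw [Function.update_of_ne (Ne.symm hi)]
    exact hq.1.1
  · intro σ hσ
    simp
  · intro q hq
    rw [Finset.mem_product] at hq
    simp only [mem_filter, mem_univ, true_and] at hq
    ext1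
    · simp [Function.update_idem, hq.1.2.symm]
    · simp
  · intro σ hσ
    have := hF σ z₀ (σ i)
    simp [this.symm]

lemma card_filter_fix {V X : Type*} [Fintype V] [DecidableEq V] [Fintype X] [DecidableEq X]
    (ρ : V) (σt : X) :
    (univ.filter (fun σ : V → X => σ ρ = σt)).card
      = Fintype.card X ^ (Fintype.card V - 1) := by
  have h1 : (univ.filter (fun σ : V → X => σ ρ = σt)).card
      = Fintype.card ({j : V // j ≠ ρ} → X) := by
    refine Finset.card_nbij' (fun σ => fun j => σ j.1)
      (fun g => fun v => if h : v = ρ then σt else g ⟨v, h⟩) ?_ ?_ ?_ ?_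
    · intro σ hσ; exact Finset.mem_univ _
    · intro g hg
      simp only [mem_coe, mem_filter, mem_univ, true_and]
      simp
    · intro σ hσ
      simp only [mem_coe, mem_filter, mem_univ, true_and] at hσ
      ext v
      by_cases h : v = ρ
      · subst h; simp [hσ]
      · simp [h]
    · intro g hg
      ext ⟨j, hj⟩
      simp [hj]
  rw [h1, Fintype.card_fun, Fintype.card_subtype_compl, Fintype.card_subtype_eq]

lemma key_sum {V X : Type*} [Fintype V] [DecidableEq V] [Fintype X] [DecidableEq X]
    (ρ : V) (σt : X) (p : V → V) (h : V → ℕ)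
    (hp : ∀ i, i ≠ ρ → h (p i) < h i)
    (f : X → X → ℝ) (c : ℝ) (hf : ∀ y, ∑ x : X, f x y = c) :
    ∀ A : Finset V, ρ ∉ A →
      ∑ σ ∈ univ.filter (fun σ : V → X => σ ρ = σt), ∏ j ∈ A, f (σ j) (σ (p j))
        = c ^ A.card * (Fintype.card X : ℝ) ^ (Fintype.card V - 1 - A.card) := by
  intro A
  induction A using Finset.strongInduction with
  | _ A ih =>
    intro hA
    rcases A.eq_empty_or_nonempty with rfl | hne
    · simp only [Finset.prod_empty, Finset.sum_const, nsmul_eq_mul, mul_one, card_empty,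
        pow_zero, one_mul, Nat.sub_zero, card_filter_fix ρ σt]
      push_cast
      ring
    · obtain ⟨i, hiA, hmax⟩ := Finset.exists_max_image A h hne
      have hiρ : i ≠ ρ := fun e => hA (e ▸ hiA)
      have hpii : p i ≠ i := fun e => lt_irrefl _ (e ▸ hp i hiρ)
      have hpj : ∀ j ∈ A, p j ≠ i := by
        intro j hj e
        have hjρ : j ≠ ρ := fun e' => hA (e' ▸ hj)
        have := hp j hjρ
        rw [e] at this
        exact absurd (hmax j hj) (not_le.2 this)
      set rest : (V → X) → ℝ := fun σ => ∏ j ∈ A.erase i, f (σ j) (σ (p j)) with hrest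
      have hrest_update : ∀ σ x, rest (Function.update σ i x) = rest σ := by
        intro σ x
        refine Finset.prod_congr rfl fun j hj => ?_
        obtain ⟨hji, hjA⟩ := Finset.mem_erase.1 hj
        rw [Function.update_of_ne hji, Function.update_of_ne (hpj j hjA)]
      have hsplit : ∀ σ : V → X, (∏ j ∈ A, f (σ j) (σ (p j)))
          = f (σ i) (σ (p i)) * rest σ := fun σ => (Finset.mul_prod_erase A _ hiA).symm
      have step1 : ∑ σ ∈ univ.filter (fun σ : V → X => σ ρ = σt), ∏ j ∈ A, f (σ j) (σ (p j))
          = c * ∑ σ ∈ univ.filter (fun σ : V → X => σ ρ = σt ∧ σ i = σt), rest σ := by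
        calc ∑ σ ∈ univ.filter (fun σ : V → X => σ ρ = σt), ∏ j ∈ A, f (σ j) (σ (p j))
            = ∑ σ ∈ univ.filter (fun σ : V → X => σ ρ = σt),
                (fun σ x => f x (σ (p i)) * rest σ) σ (σ i) := by
              exact Finset.sum_congr rfl fun σ _ => hsplit σ
          _ = ∑ σ ∈ univ.filter (fun σ : V → X => σ ρ = σt ∧ σ i = σt),
                ∑ x : X, f x (σ (p i)) * rest σ := by
              exact sum_update_aux ρ σt i hiρ σt (fun σ x => f x (σ (p i)) * rest σ)
                (fun σ x y => by simp only [Function.update_of_ne hpii, hrest_update])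
          _ = c * ∑ σ ∈ univ.filter (fun σ : V → X => σ ρ = σt ∧ σ i = σt), rest σ := by
              rw [Finset.mul_sum]
              refine Finset.sum_congr rfl fun σ _ => ?_
              rw [← Finset.sum_mul, hf]
      have step2 : ∑ σ ∈ univ.filter (fun σ : V → X => σ ρ = σt), rest σ
          = (Fintype.card X : ℝ) *
            ∑ σ ∈ univ.filter (fun σ : V → X => σ ρ = σt ∧ σ i = σt), rest σ := by
        calc ∑ σ ∈ univ.filter (fun σ : V → X => σ ρ = σt), rest σ
            = ∑ σ ∈ univ.filter (fun σ : V → X => σ ρ = σt),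
                (fun σ (_ : X) => rest σ) σ (σ i) := rfl
          _ = ∑ σ ∈ univ.filter (fun σ : V → X => σ ρ = σt ∧ σ i = σt),
                ∑ _x : X, rest σ := by
              exact sum_update_aux ρ σt i hiρ σt (fun σ _ => rest σ)
                (fun σ x y => hrest_update σ x)
          _ = (Fintype.card X : ℝ) *
              ∑ σ ∈ univ.filter (fun σ : V → X => σ ρ = σt ∧ σ i = σt), rest σ := by
              rw [Finset.mul_sum]
              refine Finset.sum_congr rfl fun σ _ => ?_
              simp [Finset.sum_const, mul_comm]
      have hIH : ∑ σ ∈ univ.filter (fun σ : V → X => σ ρ = σt), rest σ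
          = c ^ (A.erase i).card *
            (Fintype.card X : ℝ) ^ (Fintype.card V - 1 - (A.erase i).card) :=
        ih (A.erase i) (Finset.erase_ssubset hiA) (fun hmem => hA (Finset.mem_of_mem_erase hmem))
      have hNX : Nonempty X := ⟨σt⟩
      have hN : (Fintype.card X : ℝ) ≠ 0 := by
        exact_mod_cast Fintype.card_ne_zero
      have hk : 1 ≤ A.card := hne.card_pos
      have hkn : A.card ≤ Fintype.card V - 1 := by
        have hsub : A ⊆ univ.erase ρ := fun x hx =>
          Finset.mem_erase.2 ⟨fun e => hA (e ▸ hx), Finset.mem_univ x⟩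
        calc A.card ≤ (univ.erase ρ).card := Finset.card_le_card hsub
          _ = Fintype.card V - 1 := by rw [Finset.card_erase_of_mem (Finset.mem_univ ρ), Finset.card_univ]
      rw [Finset.card_erase_of_mem hiA] at hIH
      apply mul_left_cancel₀ hN
      rw [step1]
      have e1 : Fintype.card V - 1 - (A.card - 1) = (Fintype.card V - 1 - A.card) + 1 := by omega
      have e2 : A.card = (A.card - 1) + 1 := by omega
      calc (Fintype.card X : ℝ) *
            (c * ∑ σ ∈ univ.filter (fun σ : V → X => σ ρ = σt ∧ σ i = σt), rest σ)
          = c * ((Fintype.card X : ℝ) *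
            ∑ σ ∈ univ.filter (fun σ : V → X => σ ρ = σt ∧ σ i = σt), rest σ) := by ring
        _ = c * (c ^ (A.card - 1) *
            (Fintype.card X : ℝ) ^ (Fintype.card V - 1 - (A.card - 1))) := by
            rw [← step2, hIH]
        _ = (Fintype.card X : ℝ) *
            (c ^ A.card * (Fintype.card X : ℝ) ^ (Fintype.card V - 1 - A.card)) := by
            obtain ⟨m, hm⟩ : ∃ m, A.card = m + 1 := ⟨A.card - 1, by omega⟩
            rw [hm, Nat.add_sub_cancel, pow_succ,
              show Fintype.card V - 1 - m = (Fintype.card V - 1 - (m + 1)) + 1 from by omega,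
              pow_succ]
            ring

/-- eq. (B.8) of the paper. Let `T = G` be a finite tree with vertex set
`V` and edge set `E`, and `d i` the degree of vertex `i`. Let `M` be a real symmetric
matrix indexed by a finite set `X`, and `S` an eigenvector of `M` with eigenvalue `λ`,
all of whose entries are nonzero. Then for every choice of root `ρ ∈ V` and every fixed
value `σ̃ ∈ X`, the sum over all maps `σ : V → X` with `σ ρ = σ̃` of
`(∏_{(ij) ∈ E} M (σ i) (σ j)) * (∏ i, S (σ i) ^ (2 - d i))` equals
`S σ̃ ^ 2 * λ ^ (|V| - 1)`; in particular the result is independent of `ρ`. -/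
theorem tree_eigenvector_sum_symmetric
    {V X : Type*} [Fintype V] [DecidableEq V] [Fintype X] [DecidableEq X]
    (G : SimpleGraph V) [DecidableRel G.Adj] (hT : G.IsTree)
    (M : X → X → ℝ) (hsym : ∀ a b, M a b = M b a)
    (S : X → ℝ) (hS : ∀ σ, S σ ≠ 0) (lam : ℝ)
    (heig : ∀ σ, ∑ σ', M σ σ' * S σ' = lam * S σ)
    (ρ : V) (σt : X) :
    ∑ σ ∈ Finset.univ.filter (fun σ : V → X => σ ρ = σt),
      (∏ e ∈ G.edgeFinset,
        Sym2.lift ⟨fun i j => M (σ i) (σ j), fun i j => hsym (σ i) (σ j)⟩ e) *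
      (∏ i : V, S (σ i) ^ ((2 : ℤ) - (G.degree i : ℤ)))
    = S σt ^ 2 * lam ^ (Fintype.card V - 1) := by
  classical
  -- unique paths to the root
  choose P hP hPu using fun i => hT.existsUnique_path i ρ
  -- the parent function
  have hstep : ∀ i : V, ∃ j, i ≠ ρ → G.Adj i j ∧ (P i).length = (P j).length + 1 := by
    intro i
    by_cases hi : i = ρ
    · exact ⟨i, fun h => absurd hi h⟩
    · cases hw : P i with
      | nil => exact absurd rfl hi
      | cons hadj q =>
        rename_i j
        have hq : q.IsPath := by
          have := hP i; rw [hw] at this; exact this.of_cons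
        refine ⟨j, fun _ => ⟨hadj, ?_⟩⟩
        rw [← hPu j q hq, SimpleGraph.Walk.length_cons]
  choose p hpspec using hstep
  set h : V → ℕ := fun i => (P i).length with hh
  have hdec : ∀ i, i ≠ ρ → h (p i) < h i := by
    intro i hi
    have := (hpspec i hi).2
    simp only [hh]
    omega
  have hadjp : ∀ i, i ≠ ρ → G.Adj i (p i) := fun i hi => (hpspec i hi).1
  have hpne : ∀ i, i ≠ ρ → p i ≠ i := fun i hi e => lt_irrefl _ (e ▸ hdec i hi)
  set VE : Finset V := univ.erase ρ with hVE
  have hcVE : VE.card = Fintype.card V - 1 := by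
    rw [hVE, card_erase_of_mem (mem_univ ρ), card_univ]
  -- the map j ↦ s(j, p j) is a bijection from V \ {ρ} to the edge set
  have hinj : ∀ a ∈ VE, ∀ b ∈ VE, s(a, p a) = s(b, p b) → a = b := by
    intro a ha b hb hab
    have haρ : a ≠ ρ := (mem_erase.1 ha).1
    have hbρ : b ≠ ρ := (mem_erase.1 hb).1
    rcases Sym2.eq_iff.1 hab with ⟨h1, _⟩ | ⟨h1, h2⟩
    · exact h1
    · exfalso
      have h3 := hdec a haρ
      have h4 := hdec b hbρ
      rw [← h1] at h4
      rw [h2] at h3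
      omega
  have himg : VE.image (fun j => s(j, p j)) = G.edgeFinset := by
    apply Finset.eq_of_subset_of_card_le
    · intro e he
      rcases mem_image.1 he with ⟨j, hj, rfl⟩
      rw [SimpleGraph.mem_edgeFinset]
      exact hadjp j (mem_erase.1 hj).1
    · rw [Finset.card_image_of_injOn (fun a ha b hb => hinj a (mem_coe.1 ha) b (mem_coe.1 hb))]
      have hE := hT.card_edgeFinset
      omega
  -- degree formula
  set cdeg : V → ℕ := fun i => (VE.filter (fun j => p j = i)).card with hcdeg
  have hdeg : ∀ i : V, G.degree i = cdeg i + (if i = ρ then 0 else 1) := by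
    intro i
    rw [← SimpleGraph.card_incidenceFinset_eq_degree, SimpleGraph.incidenceFinset_eq_filter,
      ← himg, Finset.filter_image,
      Finset.card_image_of_injOn (fun a ha b hb =>
        hinj a (mem_filter.1 (mem_coe.1 ha)).1 b (mem_filter.1 (mem_coe.1 hb)).1)]
    have hfeq : VE.filter (fun j => i ∈ s(j, p j)) = VE.filter (fun j => j = i ∨ p j = i) := by
      refine filter_congr fun j hj => ?_
      simp [Sym2.mem_iff, eq_comm]
    rw [hfeq]
    by_cases hiρ : i = ρ
    · rw [if_pos hiρ]
      have heq2 : VE.filter (fun j => j = i ∨ p j = i) = VE.filter (fun j => p j = i) := by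
        refine filter_congr fun j hj => ?_
        have hji : j ≠ i := hiρ ▸ (mem_erase.1 hj).1
        simp [hji]
      rw [heq2, add_zero]
    · rw [if_neg hiρ, filter_or, card_union_of_disjoint, Finset.filter_eq',
        if_pos (mem_erase.2 ⟨hiρ, mem_univ i⟩), card_singleton]
      · simp only [hcdeg]
        omega
      · rw [Finset.disjoint_left]
        intro j hj1 hj2
        have hj1' := (mem_filter.1 hj1).2
        have hj2' := (mem_filter.1 hj2).2
        subst hj1'
        exact hpne j hiρ hj2'
  have hNX : Nonempty X := ⟨σt⟩
  set f : X → X → ℝ := fun x y => M x y * (S x / S y) with hf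
  have hfsum : ∀ y, ∑ x : X, f x y = lam := by
    intro y
    calc ∑ x : X, f x y = (∑ x : X, M y x * S x) / S y := by
          rw [Finset.sum_div]
          refine sum_congr rfl fun x _ => ?_
          simp only [hf]
          rw [hsym x y]
          ring
      _ = lam := by rw [heig y, mul_div_assoc, div_self (hS y), mul_one]
  have hedge : ∀ σ : V → X,
      (∏ e ∈ G.edgeFinset,
        Sym2.lift ⟨fun i j => M (σ i) (σ j), fun i j => hsym (σ i) (σ j)⟩ e)
      = ∏ j ∈ VE, M (σ j) (σ (p j)) := by
    intro σ
    rw [← himg, Finset.prod_image hinj]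
    exact prod_congr rfl fun j _ => rfl
  have hvert : ∀ σ : V → X, (∏ i : V, S (σ i) ^ ((2 : ℤ) - (G.degree i : ℤ)))
      = S (σ ρ) ^ 2 * ∏ j ∈ VE, (S (σ j) / S (σ (p j))) := by
    intro σ
    have h1 : ∏ i : V, S (σ i) ^ ((2 : ℤ) - (G.degree i : ℤ))
        = ∏ i : V, (S (σ i) ^ ((2 : ℤ) - (if i = ρ then 0 else 1)) / S (σ i) ^ (cdeg i : ℤ)) := by
      refine prod_congr rfl fun i _ => ?_
      rw [← zpow_sub₀ (hS (σ i))]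
      congr 1
      rw [hdeg i]
      push_cast
      ring
    rw [h1, Finset.prod_div_distrib]
    have h2 : ∏ i : V, S (σ i) ^ ((2 : ℤ) - (if i = ρ then 0 else 1))
        = S (σ ρ) ^ 2 * ∏ j ∈ VE, S (σ j) := by
      rw [← Finset.mul_prod_erase univ _ (mem_univ ρ)]
      congr 1
      · rw [if_pos rfl, sub_zero, show ((2 : ℤ)) = ((2 : ℕ) : ℤ) from rfl, zpow_natCast]
      · refine prod_congr rfl fun j hj => ?_
        rw [if_neg (mem_erase.1 hj).1]
        norm_num
    have h3 : ∏ i : V, S (σ i) ^ (cdeg i : ℤ) = ∏ j ∈ VE, S (σ (p j)) := by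
      have h4 := Finset.prod_fiberwise_of_maps_to (s := VE) (t := univ) (g := p)
        (fun j _ => mem_univ (p j)) (fun j => S (σ (p j)))
      rw [← h4]
      refine prod_congr rfl fun i _ => ?_
      have h5 : ∏ x ∈ VE.filter (fun j => p j = i), S (σ (p x))
          = ∏ x ∈ VE.filter (fun j => p j = i), S (σ i) :=
        prod_congr rfl fun x hx => by rw [(mem_filter.1 hx).2]
      rw [h5, prod_const, zpow_natCast]
    rw [h2, h3, Finset.prod_div_distrib, mul_div_assoc]
  have hρVE : ρ ∉ VE := Finset.notMem_erase ρ univ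
  have hkey := key_sum ρ σt p h hdec f lam hfsum VE hρVE
  calc ∑ σ ∈ Finset.univ.filter (fun σ : V → X => σ ρ = σt),
      (∏ e ∈ G.edgeFinset,
        Sym2.lift ⟨fun i j => M (σ i) (σ j), fun i j => hsym (σ i) (σ j)⟩ e) *
      (∏ i : V, S (σ i) ^ ((2 : ℤ) - (G.degree i : ℤ)))
      = ∑ σ ∈ Finset.univ.filter (fun σ : V → X => σ ρ = σt),
          S σt ^ 2 * ∏ j ∈ VE, f (σ j) (σ (p j)) := by
        refine sum_congr rfl fun σ hσ => ?_
        have hσρ : σ ρ = σt := (mem_filter.1 hσ).2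
        rw [hedge σ, hvert σ, hσρ, hf]
        rw [Finset.prod_mul_distrib]
        ring
    _ = S σt ^ 2 * ∑ σ ∈ Finset.univ.filter (fun σ : V → X => σ ρ = σt),
          ∏ j ∈ VE, f (σ j) (σ (p j)) := by rw [Finset.mul_sum]
    _ = S σt ^ 2 * (lam ^ VE.card * (Fintype.card X : ℝ) ^ (Fintype.card V - 1 - VE.card)) := by
        rw [hkey]
    _ = S σt ^ 2 * lam ^ (Fintype.card V - 1) := by
        rw [hcVE, Nat.sub_self, pow_zero, mul_one]
end

section
/- For all r1, r2, r3, r4 ∈ X, the four-leg vertex decomposes into three-point couplings: ∑_{σ ∈ X} S_(r1)^σ S_(r2)^σ S_(r3)^σ S_(r4)^σ / S_σ^2 = ∑_{r ∈ X} C_{r1, r2, r} C_{r, r3, r4}. In particular the quantity C^{(0)}_{r1,r2,r3,r4} := ∑_{r} C_{r1,r2,r} C_{r,r3,r4} is symmetric under all permutations of its four indices. -/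
open Finset

/-- The RSOS three-point coupling `C_{r1,r2,r3} = ∑_σ S_(r1)^σ S_(r2)^σ S_(r3)^σ / S_σ`,
where `S_σ = S_(rid)^σ` is the distinguished eigenvector. -/
noncomputable def threePointCoupling {X : Type*} [Fintype X]
    (S : X → X → ℝ) (rid : X) (r1 r2 r3 : X) : ℝ :=
  ∑ σ, S r1 σ * S r2 σ * S r3 σ / S rid σ

/-- eq. (B.30) of the paper. The four-leg vertex decomposes into
three-point couplings:
`∑_σ S_(r1)^σ S_(r2)^σ S_(r3)^σ S_(r4)^σ / S_σ^2 = ∑_r C_{r1,r2,r} C_{r,r3,r4}`.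
In particular `C⁰_{r1,r2,r3,r4} := ∑_r C_{r1,r2,r} C_{r,r3,r4}` is symmetric under all
permutations of its four indices. -/
theorem four_leg_vertex_decomposition
    {X : Type*} [Fintype X] [DecidableEq X]
    (S : X → X → ℝ)
    (horth : ∀ r r', ∑ σ, S r σ * S r' σ = if r = r' then 1 else 0)
    (rid : X) (hSne : ∀ σ, S rid σ ≠ 0)
    (r1 r2 r3 r4 : X) :
    (∑ σ, S r1 σ * S r2 σ * S r3 σ * S r4 σ / (S rid σ) ^ 2
      = ∑ r, threePointCoupling S rid r1 r2 r * threePointCoupling S rid r r3 r4)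
    ∧ ∀ π : Equiv.Perm (Fin 4),
        (∑ r, threePointCoupling S rid (![r1, r2, r3, r4] (π 0)) (![r1, r2, r3, r4] (π 1)) r
            * threePointCoupling S rid r (![r1, r2, r3, r4] (π 2)) (![r1, r2, r3, r4] (π 3)))
        = ∑ r, threePointCoupling S rid r1 r2 r * threePointCoupling S rid r r3 r4 := by
  -- completeness relation from orthonormality
  have hcomp : ∀ σ τ : X, ∑ r, S r σ * S r τ = if σ = τ then 1 else 0 := by
    have h1 : (Matrix.of S) * (Matrix.of S).transpose = 1 := by
      ext r r'
      simp [Matrix.mul_apply, Matrix.one_apply, horth]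
    have h2 : (Matrix.of S).transpose * (Matrix.of S) = 1 := mul_eq_one_comm.mp h1
    intro σ τ
    have h3 := congrFun (congrFun h2 σ) τ
    simpa [Matrix.mul_apply, Matrix.transpose_apply, Matrix.one_apply] using h3
  have key : ∀ a b c d : X,
      ∑ r, threePointCoupling S rid a b r * threePointCoupling S rid r c d
        = ∑ σ, S a σ * S b σ * S c σ * S d σ / (S rid σ) ^ 2 := by
    intro a b c d
    unfold threePointCoupling
    have hsplit : ∀ r : X,
        (∑ σ, S a σ * S b σ * S r σ / S rid σ) * (∑ τ, S r τ * S c τ * S d τ / S rid τ)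
          = ∑ σ, ∑ τ, (S a σ * S b σ / S rid σ) * (S c τ * S d τ / S rid τ)
              * (S r σ * S r τ) := by
      intro r
      rw [Finset.sum_mul_sum]
      exact Finset.sum_congr rfl fun σ _ => Finset.sum_congr rfl fun τ _ => by ring
    simp only [hsplit]
    rw [Finset.sum_comm]
    have hinner : ∀ σ : X,
        ∑ r, ∑ τ, (S a σ * S b σ / S rid σ) * (S c τ * S d τ / S rid τ) * (S r σ * S r τ)
          = S a σ * S b σ * S c σ * S d σ / (S rid σ) ^ 2 := by
      intro σ
      rw [Finset.sum_comm]
      have : ∀ τ : X,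
          ∑ r, (S a σ * S b σ / S rid σ) * (S c τ * S d τ / S rid τ) * (S r σ * S r τ)
            = (S a σ * S b σ / S rid σ) * (S c τ * S d τ / S rid τ)
                * (if σ = τ then 1 else 0) := by
        intro τ
        rw [← Finset.mul_sum, hcomp]
      simp only [this, mul_ite, mul_one, mul_zero]
      simp only [Finset.sum_ite_eq, Finset.mem_univ, if_true]
      have hs := hSne σ
      field_simp
    exact Finset.sum_congr rfl fun σ _ => hinner σ
  have hprod : ∀ (π : Equiv.Perm (Fin 4)) (σ : X),
      S (![r1, r2, r3, r4] (π 0)) σ * S (![r1, r2, r3, r4] (π 1)) σ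
        * S (![r1, r2, r3, r4] (π 2)) σ * S (![r1, r2, r3, r4] (π 3)) σ
        = S r1 σ * S r2 σ * S r3 σ * S r4 σ := by
    intro π σ
    have h := Equiv.prod_comp π (fun i => S (![r1, r2, r3, r4] i) σ)
    simpa [Fin.prod_univ_four, mul_assoc] using h
  refine ⟨(key r1 r2 r3 r4).symm, fun π => ?_⟩
  rw [key, key]
  exact Finset.sum_congr rfl fun σ _ => by rw [hprod π σ]
end

section
/- Crossing symmetry of the three-point couplings: for all r1, r2, r3, r4 ∈ X, ∑_{r ∈ X} C_{r1, r2, r} C_{r, r3, r4} = ∑_{r ∈ X} C_{r1, r3, r} C_{r, r2, r4} = ∑_{r ∈ X} C_{r1, r4, r} C_{r, r2, r3}; that is, the s-, t- and u-channel contractions of two three-point couplings coincide. -/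
open Finset

lemma contraction_eq {X : Type*} [Fintype X] [DecidableEq X]
    (S : X → X → ℝ)
    (hcomp : ∀ σ τ, ∑ r, S r σ * S r τ = if σ = τ then 1 else 0)
    (rid : X) (a b c d : X) :
    ∑ r, threePointCoupling S rid a b r * threePointCoupling S rid r c d
      = ∑ σ, S a σ * S b σ * S c σ * S d σ / (S rid σ)^2 := by
  simp only [threePointCoupling, Finset.sum_mul_sum]
  rw [Finset.sum_comm]
  refine Finset.sum_congr rfl fun σ _ => ?_
  rw [Finset.sum_comm]
  have h : ∀ τ ∈ (Finset.univ : Finset X),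
      (∑ r, S a σ * S b σ * S r σ / S rid σ * (S r τ * S c τ * S d τ / S rid τ))
      = (if σ = τ then 1 else 0) * (S a σ * S b σ * S c τ * S d τ / (S rid σ * S rid τ)) := by
    intro τ _
    rw [show (∑ r, S a σ * S b σ * S r σ / S rid σ * (S r τ * S c τ * S d τ / S rid τ))
        = (∑ r, S r σ * S r τ) * (S a σ * S b σ * S c τ * S d τ / (S rid σ * S rid τ)) by
        rw [Finset.sum_mul]; exact Finset.sum_congr rfl fun r _ => by ring]
    rw [hcomp]
  rw [Finset.sum_congr rfl h]
  simp only [ite_mul, one_mul, zero_mul, Finset.sum_ite_eq, Finset.mem_univ, if_true]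
  ring

/-- eq. (B.31) of the paper, crossing symmetry. For all
`r1, r2, r3, r4 ∈ X`,
`∑_r C_{r1,r2,r} C_{r,r3,r4} = ∑_r C_{r1,r3,r} C_{r,r2,r4} = ∑_r C_{r1,r4,r} C_{r,r2,r3}`:
the s-, t- and u-channel contractions of two three-point couplings coincide. -/
theorem crossing_symmetry
    {X : Type*} [Fintype X] [DecidableEq X]
    (S : X → X → ℝ)
    (horth : ∀ r r', ∑ σ, S r σ * S r' σ = if r = r' then 1 else 0)
    (rid : X) (hSne : ∀ σ, S rid σ ≠ 0)
    (r1 r2 r3 r4 : X) :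
    (∑ r, threePointCoupling S rid r1 r2 r * threePointCoupling S rid r r3 r4
      = ∑ r, threePointCoupling S rid r1 r3 r * threePointCoupling S rid r r2 r4)
    ∧ (∑ r, threePointCoupling S rid r1 r3 r * threePointCoupling S rid r r2 r4
      = ∑ r, threePointCoupling S rid r1 r4 r * threePointCoupling S rid r r2 r3) := by
  have hcomp : ∀ σ τ, ∑ r, S r σ * S r τ = if σ = τ then 1 else 0 := by
    let M : Matrix X X ℝ := Matrix.of S
    have hMMT : M * Matrix.transpose M = 1 := by
      ext r r'
      simpa [Matrix.mul_apply, Matrix.one_apply, M] using horth r r'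
    have hMTM : Matrix.transpose M * M = 1 := mul_eq_one_comm.mp hMMT
    intro σ τ
    have := congrFun (congrFun hMTM σ) τ
    simpa [Matrix.mul_apply, Matrix.one_apply, M, mul_comm] using this
  constructor
  · rw [contraction_eq S hcomp rid r1 r2 r3 r4, contraction_eq S hcomp rid r1 r3 r2 r4]
    exact Finset.sum_congr rfl fun σ _ => by ring
  · rw [contraction_eq S hcomp rid r1 r3 r2 r4, contraction_eq S hcomp rid r1 r4 r2 r3]
    exact Finset.sum_congr rfl fun σ _ => by ring
end

section
/- Let p be a positive even integer and k a positive even integer. Then ∑_{r=1, r odd}^{p−1} (2 cos(rπ/p))^k = (p/2) · binom(k, k/2) + p · ∑_{n=1}^{⌊k/p⌋} (−1)^n binom(k, (k − n p)/2), where binom denotes the binomial coefficient (note that (k − n p)/2 is a nonnegative integer for 1 ≤ n ≤ ⌊k/p⌋ since k, p and hence n p are even). In particular, when p > k the sum equals (p/2) · binom(k, k/2). -/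
/-!
Write `p = 2q`, `k = 2h` and `ζ = exp(2πi/p)`. As `2 cos(rπ/p) = w + w⁻¹` with `w² = ζ^r`, the
binomial theorem gives `(2 cos(rπ/p))^k = ∑ⱼ C(k, j) ζ^(r(j-h))`. Summing over odd `r = 2s + 1`
turns the inner sum into `ζ^t ∑_{s<q} (ζ^(2t))^s`, a geometric sum over `q`-th roots of unity: it is
`q ζ^t` when `q ∣ t` and `0` otherwise. So only `j = h ± nq` survive, and since `ζ^q = -1` and
`C(k, h + nq) = C(k, h - nq)`, each of them contributes `q (-1)^n C(k, h - nq)`.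
-/

open Finset

theorem Finset.sum_range_two_mul_add_one_eq_add_sum_Icc {M : Type*} [AddCommMonoid M]
    (f : ℕ → M) (h : ℕ) :
    ∑ j ∈ range (2 * h + 1), f j = f h + ∑ i ∈ Icc 1 h, (f (h - i) + f (h + i)) := by
  rw [show 2 * h + 1 = (h + 1) + h by ring, sum_range_add, sum_range_succ, ← sum_range_reflect,
    add_comm _ (f h), add_assoc, ← sum_add_distrib, ← Ico_add_one_right_eq_Icc,
    sum_Ico_eq_sum_range, Nat.add_sub_cancel]
  refine congrArg _ (sum_congr rfl fun i _ => ?_)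
  rw [Nat.sub_sub, add_assoc]

theorem Finset.sum_filter_dvd_Icc_one {M : Type*} [AddCommMonoid M] (f : ℕ → M) {q : ℕ}
    (hq : 0 < q) (h : ℕ) :
    ∑ i ∈ (Icc 1 h).filter (q ∣ ·), f i = ∑ n ∈ Icc 1 (h / q), f (n * q) := by
  refine sum_nbij' (· / q) (· * q) ?_ ?_ ?_ ?_ ?_
  · simp only [mem_filter, mem_Icc, and_imp]
    intro i hi1 hih hqi
    exact ⟨Nat.div_pos (Nat.le_of_dvd hi1 hqi) hq, Nat.div_le_div_right hih⟩
  · simp only [mem_filter, mem_Icc, and_imp]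
    intro n hn1 hnh
    exact ⟨⟨Nat.mul_pos hn1 hq, (Nat.le_div_iff_mul_le hq).mp hnh⟩, dvd_mul_left q n⟩
  · simp only [mem_filter, and_imp]
    exact fun i _ hqi => Nat.div_mul_cancel hqi
  · exact fun n _ => Nat.mul_div_cancel n hq
  · simp only [mem_filter, and_imp]
    exact fun i _ hqi => by rw [Nat.div_mul_cancel hqi]

theorem Finset.sum_filter_odd_range_two_mul {M : Type*} [AddCommMonoid M] (f : ℕ → M) (q : ℕ) :
    ∑ r ∈ (range (2 * q)).filter Odd, f r = ∑ s ∈ range q, f (2 * s + 1) := by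
  refine sum_nbij' (· / 2) (2 * · + 1) ?_ ?_ ?_ ?_ ?_ <;>
    simp only [mem_filter, mem_range, Nat.odd_iff] <;> intros <;> first | omega | congr 1; omega

theorem sum_range_choose_two_mul_mul_of_even {R : Type*} [CommSemiring R] {g : ℤ → R}
    (hg : g.Even) (h : ℕ) :
    ∑ j ∈ range (2 * h + 1), ((2 * h).choose j : R) * g (j - h) =
      (2 * h).choose h * g 0 + 2 * ∑ i ∈ Icc 1 h, ((2 * h).choose (h - i) : R) * g i := by
  rw [sum_range_two_mul_add_one_eq_add_sum_Icc, sub_self, mul_sum]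
  refine congrArg _ (sum_congr rfl fun i hi => ?_)
  have hih : i ≤ h := (mem_Icc.mp hi).2
  rw [Nat.cast_sub hih, Nat.cast_add, sub_sub_cancel_left, hg, add_sub_cancel_left,
    ← Nat.choose_symm_of_eq_add (by omega : 2 * h = (h - i) + (h + i))]
  ring

namespace IsPrimitiveRoot

variable {K : Type*} [Field K] {ζ : K}

theorem sum_range_zpow_pow {n : ℕ} (hζ : IsPrimitiveRoot ζ n) (t : ℤ) :
    ∑ s ∈ range n, (ζ ^ t) ^ s = if (n : ℤ) ∣ t then (n : K) else 0 := by
  split_ifs with hnt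
  · simp [(hζ.zpow_eq_one_iff_dvd t).mpr hnt]
  · have hne : ζ ^ t ≠ 1 := mt (hζ.zpow_eq_one_iff_dvd t).mp hnt
    rw [geom_sum_eq hne, ← zpow_natCast, ← zpow_mul, mul_comm, zpow_mul, zpow_natCast,
      hζ.pow_eq_one, one_zpow, sub_self, zero_div]

theorem sum_filter_odd_pow_zpow {q : ℕ} (hq : 0 < q) (hζ : IsPrimitiveRoot ζ (2 * q)) (t : ℤ) :
    ∑ r ∈ (range (2 * q)).filter Odd, (ζ ^ r) ^ t = if (q : ℤ) ∣ t then q * ζ ^ t else 0 := by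
  have hsplit (s : ℕ) : (ζ ^ (2 * s + 1)) ^ t = ζ ^ t * ((ζ ^ 2) ^ t) ^ s := by
    rw [pow_succ, mul_zpow, pow_mul, ← zpow_natCast (ζ ^ 2) s, ← zpow_mul, mul_comm (s : ℤ) t,
      zpow_mul, zpow_natCast, mul_comm]
  rw [sum_filter_odd_range_two_mul, sum_congr rfl fun s _ => hsplit s, ← mul_sum,
    sum_range_zpow_pow (hζ.pow (by omega) rfl), mul_ite, mul_zero, mul_comm]

end IsPrimitiveRoot

theorem Complex.two_cos_pow_two_mul (θ : ℂ) (h : ℕ) :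
    (2 * cos θ) ^ (2 * h) =
      ∑ j ∈ range (2 * h + 1), ((2 * h).choose j : ℂ) * exp (2 * θ * I) ^ ((j : ℤ) - h) := by
  have hsq : exp (2 * θ * I) = exp (θ * I) ^ 2 := by rw [← exp_nat_mul]; ring_nf
  rw [two_cos, neg_mul, exp_neg, add_pow, hsq]
  set w := exp (θ * I)
  have hw : w ≠ 0 := exp_ne_zero _
  refine sum_congr rfl fun j hj => ?_
  have hj : j ≤ 2 * h := Nat.lt_succ_iff.mp (mem_range.mp hj)
  rw [mul_comm, ← zpow_natCast w 2, ← zpow_mul, inv_pow, ← zpow_natCast w j,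
    ← zpow_natCast w (2 * h - j), ← zpow_neg, ← zpow_add₀ hw]
  push_cast [hj]
  ring_nf

theorem sum_filter_odd_two_cos_pow_two_mul (q h : ℕ) (hq : 0 < q) :
    ∑ r ∈ (range (2 * q)).filter Odd, (2 * Real.cos (r * Real.pi / (2 * q))) ^ (2 * h) =
      q * (2 * h).choose h +
        2 * q * ∑ n ∈ Icc 1 (h / q), (-1) ^ n * ((2 * h).choose (h - n * q) : ℝ) := by
  set ζ := Complex.exp (2 * Real.pi * Complex.I / (2 * q : ℕ))
  have hζ : IsPrimitiveRoot ζ (2 * q) := Complex.isPrimitiveRoot_exp _ (by omega)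
  have hζq : ζ ^ q = -1 := (hζ.pow (by omega) (mul_comm 2 q)).eq_neg_one_of_two_right
  set g : ℤ → ℂ := fun t => if (q : ℤ) ∣ t then q * ζ ^ t else 0 with hg_def
  have hg : g.Even := by
    intro t
    simp only [hg_def, Int.dvd_neg]
    split_ifs with hqt
    · have hsq : ζ ^ t * ζ ^ t = 1 := by
        rw [← zpow_add₀ (hζ.ne_zero (by omega)), hζ.zpow_eq_one_iff_dvd, ← two_mul]
        push_cast
        exact mul_dvd_mul_left 2 hqt
      rw [zpow_neg, inv_eq_of_mul_eq_one_right hsq]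
    · rfl
  have hterm (r : ℕ) : (((2 * Real.cos (r * Real.pi / (2 * q))) ^ (2 * h) : ℝ) : ℂ) =
      ∑ j ∈ range (2 * h + 1), ((2 * h).choose j : ℂ) * (ζ ^ r) ^ ((j : ℤ) - h) := by
    have hexp : Complex.exp (2 * (r * Real.pi / (2 * q) : ℝ) * Complex.I) = ζ ^ r := by
      rw [← Complex.exp_nat_mul]; congr 1; push_cast; ring
    rw [← hexp, ← Complex.two_cos_pow_two_mul]
    push_cast
    rfl
  have hsum_Icc : ∑ i ∈ Icc 1 h, ((2 * h).choose (h - i) : ℂ) * g i =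
      q * ∑ n ∈ Icc 1 (h / q), (-1) ^ n * ((2 * h).choose (h - n * q) : ℂ) := by
    simp only [hg_def, Int.natCast_dvd_natCast, mul_ite, mul_zero]
    rw [← sum_filter, sum_filter_dvd_Icc_one _ hq, mul_sum]
    refine sum_congr rfl fun n _ => ?_
    rw [zpow_natCast, pow_mul', hζq]
    ring
  apply Complex.ofReal_injective
  rw [Complex.ofReal_sum, sum_congr rfl fun r _ => hterm r, sum_comm]
  simp only [← mul_sum, hζ.sum_filter_odd_pow_zpow hq]
  rw [sum_range_choose_two_mul_mul_of_even hg, hsum_Icc, show g 0 = q by simp [hg_def]]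
  push_cast
  ring

theorem sum_odd_cos_pow_even_general
    (p k : ℕ) (hp : 0 < p) (hpe : Even p) (hke : Even k) :
    (∑ r ∈ (Finset.range p).filter (fun r => Odd r),
        (2 * Real.cos (r * Real.pi / p)) ^ k
      = (p : ℝ) / 2 * (k.choose (k / 2)) +
        (p : ℝ) * ∑ n ∈ Finset.Icc 1 (k / p),
          (-1 : ℝ) ^ n * (k.choose ((k - n * p) / 2)))
    ∧ (k < p →
      ∑ r ∈ (Finset.range p).filter (fun r => Odd r),
        (2 * Real.cos (r * Real.pi / p)) ^ k
      = (p : ℝ) / 2 * (k.choose (k / 2))) := by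
  obtain ⟨q, rfl⟩ := hpe.two_dvd
  obtain ⟨h, rfl⟩ := hke.two_dvd
  have hmain := sum_filter_odd_two_cos_pow_two_mul q h (by omega)
  have hhalf (n : ℕ) : (2 * h - n * (2 * q)) / 2 = h - n * q := by
    rw [mul_left_comm, ← Nat.mul_sub, Nat.mul_div_cancel_left _ two_pos]
  simp only [Nat.mul_div_cancel_left h two_pos, Nat.mul_div_mul_left h q two_pos, hhalf]
  push_cast
  refine ⟨by rw [hmain]; ring, fun hkp => ?_⟩
  rw [hmain, Nat.div_eq_of_lt (by omega : h < q)]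
  simp

/-- eqs. (4.10)–(4.11) of the paper. Let `p` and `k` be positive even
integers. Then
`∑_{r=1, r odd}^{p-1} (2 cos(rπ/p))^k
  = (p/2)·binom(k, k/2) + p·∑_{n=1}^{⌊k/p⌋} (-1)^n binom(k, (k - n p)/2)`.
In particular, when `p > k` the sum equals `(p/2)·binom(k, k/2)`. -/
theorem sum_odd_cos_pow_even
    (p k : ℕ) (hp : 0 < p) (hpe : Even p) (hk : 0 < k) (hke : Even k) :
    (∑ r ∈ (Finset.range p).filter (fun r => Odd r),
        (2 * Real.cos (r * Real.pi / p)) ^ k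
      = (p : ℝ) / 2 * (k.choose (k / 2)) +
        (p : ℝ) * ∑ n ∈ Finset.Icc 1 (k / p),
          (-1 : ℝ) ^ n * (k.choose ((k - n * p) / 2)))
    ∧ (k < p →
      ∑ r ∈ (Finset.range p).filter (fun r => Odd r),
        (2 * Real.cos (r * Real.pi / p)) ^ k
      = (p : ℝ) / 2 * (k.choose (k / 2))) :=
  sum_odd_cos_pow_even_general p k hp hpe hke
end

section
/- Let p ≥ 4 be an even integer and q an odd integer with 0 < q < p and gcd(p, q) = 1 (so that sin((p−q)σπ/p) ≠ 0 for every σ ∈ {1, …, p−1}). For an integer r with 1 ≤ r ≤ p − 1, define C(r) := (2/p) · ∑_{σ=1}^{p−1} sin(σπ/2)^2 · sin(rσπ/p) / sin((p−q)σπ/p). Then: (i) if r is even, C(r) = 0; (ii) if r is odd, letting a be the unique integer with 1 ≤ a ≤ p − 1 and a(p−q) ≡ r (mod p), and setting b := (a(p−q) − r)/p, one has C(r) = (−1)^b. -/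
/-!
Only odd `σ` contribute, since `sin (σπ/2)²` is `0` at even and `1` at odd `σ`. Write
`a D = r + b p` with `D = p - q` and `θ = Dσπ/p`. For odd `σ` the numerator is
`sin (aθ - bσπ) = (-1)^b sin (aθ)`, and `sin (aθ) / sin θ = ∑_{j<a} cos ((a-1-2j)θ)`.
Summed over the `p/2` odd `σ < p`, `cos (mσπ/p)` gives `p/2` for `m = 0` and `0` whenever
`p ∤ m` (telescope against `2 sin (mπ/p)`). As `D` is a unit mod `p` and `|a-1-2j| < p`, only
the central term `2j + 1 = a` survives, so `C(r) = (-1)^b` for odd `a` and `0` otherwise;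
finally `a ≡ r (mod 2)` because `D` is odd and `p` even.
-/

open Finset Real

lemma sum_range_two_mul_eq_sum_add {M : Type*} [AddCommMonoid M] (f : ℕ → M) (n : ℕ) :
    ∑ i ∈ range (2 * n), f i = ∑ k ∈ range n, (f (2 * k) + f (2 * k + 1)) := by
  induction n with
  | zero => simp
  | succ n ih => simp [Nat.mul_succ, sum_range_succ, ih, add_assoc]

lemma sum_range_ite_two_mul_add_one_eq {M : Type*} [AddCommMonoid M] (a : ℕ) (c : M) :
    ∑ j ∈ range a, (if 2 * j + 1 = a then c else 0) = if Odd a then c else 0 := by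
  split_ifs with ha
  · obtain ⟨m, rfl⟩ := ha
    simp_rw [show ∀ j, 2 * j + 1 = 2 * m + 1 ↔ j = m by omega]
    rw [sum_ite_eq', if_pos (mem_range.mpr (by omega))]
  · exact sum_eq_zero fun j _ => if_neg fun h => ha ⟨j, h.symm⟩

lemma eq_add_div_mul_of_modEq {x r p : ℕ} (h : x ≡ r [MOD p]) (hr : r < p) :
    x = r + x / p * p := by
  have := Nat.div_add_mod' x p
  rw [h, Nat.mod_eq_of_lt hr] at this
  omega

lemma odd_iff_odd_of_mul_eq_add_mul {p D r a b : ℕ} (hp : Even p) (hD : Odd D)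
    (hab : a * D = r + b * p) : Odd a ↔ Odd r := by
  simpa [Nat.odd_mul, Nat.odd_add, hD, hp.mul_left b] using congrArg Odd hab

lemma int_dvd_sub_one_sub_two_mul_mul_iff {p D a j : ℕ} (hD : Nat.Coprime p D) (ha : a ≤ p)
    (hj : j < a) : (p : ℤ) ∣ (a - 1 - 2 * j) * D ↔ 2 * j + 1 = a := by
  constructor
  · intro h
    have h' := (Nat.isCoprime_iff_coprime.mpr hD).dvd_of_dvd_mul_right h
    have := Int.eq_zero_of_abs_lt_dvd h' (abs_lt.mpr ⟨by omega, by omega⟩)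
    omega
  · intro h
    rw [show (a : ℤ) - 1 - 2 * j = 0 by omega, zero_mul]
    exact dvd_zero _

lemma sin_int_mul_pi_div_eq_zero_iff {p : ℕ} (hp : p ≠ 0) (t : ℤ) :
    sin (t * π / p) = 0 ↔ (p : ℤ) ∣ t := by
  rw [sin_eq_zero_iff]
  constructor
  · rintro ⟨m, hm⟩
    refine ⟨m, ?_⟩
    have : (t : ℝ) = p * m := by
      field_simp at hm
      linarith
    exact_mod_cast this
  · rintro ⟨m, rfl⟩
    exact ⟨m, by push_cast; field_simp⟩

lemma two_mul_sin_mul_sum_range_cos_odd_mul (α : ℝ) (n : ℕ) :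
    2 * sin α * ∑ k ∈ range n, cos ((2 * k + 1) * α) = sin (2 * n * α) := by
  have step (k : ℕ) :
      2 * sin α * cos ((2 * k + 1) * α) = sin (2 * (k + 1 : ℕ) * α) - sin (2 * k * α) := by
    rw [two_mul_sin_mul_cos, show α - (2 * k + 1) * α = -(2 * k * α) by ring,
      show α + (2 * k + 1) * α = 2 * (k + 1 : ℕ) * α by push_cast; ring, sin_neg]
    ring
  rw [mul_sum, sum_congr rfl fun k _ => step k, sum_range_sub (fun k : ℕ => sin (2 * k * α))]
  simp

lemma sin_mul_sum_range_cos (a : ℕ) (θ : ℝ) :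
    sin θ * ∑ j ∈ range a, cos ((a - 1 - 2 * j : ℝ) * θ) = sin (a * θ) := by
  have step (j : ℕ) : 2 * sin θ * cos ((a - 1 - 2 * j : ℝ) * θ)
      = sin ((a - 2 * j : ℝ) * θ) - sin ((a - 2 * (j + 1 : ℕ) : ℝ) * θ) := by
    rw [two_mul_sin_mul_cos, show θ - (a - 1 - 2 * j) * θ = -((a - 2 * (j + 1 : ℕ)) * θ) by
      push_cast; ring, show θ + (a - 1 - 2 * j) * θ = (a - 2 * j) * θ by ring, sin_neg]
    ring
  have h := sum_range_sub' (fun j : ℕ => sin ((a - 2 * j : ℝ) * θ)) a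
  rw [← sum_congr rfl fun j _ => step j, ← mul_sum] at h
  simp only [Nat.cast_zero, mul_zero, sub_zero] at h
  rw [show ((a : ℝ) - 2 * a) * θ = -(a * θ) by ring, sin_neg] at h
  linarith

lemma sum_Icc_sin_sq_mul_pi_div_two_mul {p : ℕ} (hp : Even p) (g : ℕ → ℝ) :
    ∑ σ ∈ Icc 1 (p - 1), sin (σ * π / 2) ^ 2 * g σ = ∑ k ∈ range (p / 2), g (2 * k + 1) := by
  obtain ⟨n, rfl⟩ := hp.two_dvd
  have heven (k : ℕ) : sin ((2 * k : ℕ) * π / 2) = 0 := by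
    rw [show ((2 * k : ℕ) : ℝ) * π / 2 = k * π by push_cast; ring, sin_nat_mul_pi]
  have hodd (k : ℕ) : sin ((2 * k + 1 : ℕ) * π / 2) ^ 2 = 1 := by
    rw [show ((2 * k + 1 : ℕ) : ℝ) * π / 2 = k * π + π / 2 by push_cast; ring, sin_add_pi_div_two,
      cos_nat_mul_pi, ← pow_mul, mul_comm, pow_mul, neg_one_sq, one_pow]
  have hrange : ∑ σ ∈ Icc 1 (2 * n - 1), sin (σ * π / 2) ^ 2 * g σ
      = ∑ σ ∈ range (2 * n), sin (σ * π / 2) ^ 2 * g σ := by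
    refine sum_subset (fun σ hσ => by simp at hσ ⊢; omega) fun σ hσ hσ' => ?_
    obtain rfl : σ = 0 := by simp at hσ hσ'; omega
    simp
  rw [hrange, sum_range_two_mul_eq_sum_add, Nat.mul_div_cancel_left n two_pos]
  refine sum_congr rfl fun k _ => ?_
  rw [heven, hodd]
  ring

lemma sum_range_cos_odd_mul_int_mul_pi_div {p : ℕ} (hp : Even p) {t : ℤ} (ht : ¬ (p : ℤ) ∣ t) :
    ∑ k ∈ range (p / 2), cos (t * (2 * k + 1 : ℕ) * π / p) = 0 := by
  obtain ⟨n, rfl⟩ := hp.two_dvd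
  rcases Nat.eq_zero_or_pos n with rfl | hn
  · simp
  have hsin : sin (t * π / (2 * n : ℕ)) ≠ 0 :=
    (sin_int_mul_pi_div_eq_zero_iff (by omega) t).not.mpr ht
  have h := two_mul_sin_mul_sum_range_cos_odd_mul (t * π / (2 * n : ℕ)) n
  rw [show 2 * (n : ℝ) * (t * π / (2 * n : ℕ)) = t * π by push_cast; field_simp,
    sin_int_mul_pi, mul_eq_zero] at h
  rw [Nat.mul_div_cancel_left n two_pos]
  convert h.resolve_left (by simpa using hsin) using 3 with k
  push_cast
  ring

lemma sum_range_cos_mul_odd_mul_pi_div {p D a j : ℕ} (hp : Even p) (hD : Nat.Coprime p D)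
    (ha : a ≤ p) (hj : j < a) :
    ∑ k ∈ range (p / 2), cos (((a - 1 - 2 * j : ℤ) * D : ℤ) * (2 * k + 1 : ℕ) * π / p)
      = if 2 * j + 1 = a then (p / 2 : ℝ) else 0 := by
  split_ifs with h
  · rw [show (a : ℤ) - 1 - 2 * j = 0 by omega]
    simp [Nat.cast_div_charZero hp.two_dvd]
  · exact sum_range_cos_odd_mul_int_mul_pi_div hp
      ((int_dvd_sub_one_sub_two_mul_mul_iff hD ha hj).not.mpr h)

lemma sin_div_sin_eq_neg_one_pow_mul_sum_cos {p D r a b σ : ℕ} (hp : p ≠ 0)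
    (hab : a * D = r + b * p) (hσ : Odd σ) (hsin : sin (D * σ * π / p) ≠ 0) :
    sin (r * σ * π / p) / sin (D * σ * π / p)
      = (-1) ^ b * ∑ j ∈ range a, cos (((a - 1 - 2 * j : ℤ) * D : ℤ) * σ * π / p) := by
  set θ := D * σ * π / p
  have hr : (r : ℝ) = a * D - b * p := by
    rw [eq_sub_iff_add_eq]
    exact_mod_cast hab.symm
  have hnum : sin (r * σ * π / p) = (-1) ^ b * sin (a * θ) := by
    rw [show r * σ * π / p = a * θ - (σ * b : ℕ) * π by simp only [θ, hr]; push_cast; field_simp,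
      sin_sub_nat_mul_pi, pow_mul, hσ.neg_one_pow]
  rw [hnum, mul_div_assoc]
  congr 1
  rw [div_eq_iff hsin, ← sin_mul_sum_range_cos, mul_comm]
  congr 1
  refine sum_congr rfl fun j _ => congrArg cos ?_
  simp only [θ]
  push_cast
  ring

theorem coupling_sum_eq {p D r a b : ℕ} (hp : Even p) (hD : Nat.Coprime p D) (ha : a < p)
    (hab : a * D = r + b * p) :
    (2 / (p : ℝ)) * ∑ σ ∈ Icc 1 (p - 1),
        sin (σ * π / 2) ^ 2 * sin (r * σ * π / p) / sin (D * σ * π / p)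
      = (-1) ^ b * if Odd a then 1 else 0 := by
  have hp0 : p ≠ 0 := by omega
  have hsin (k : ℕ) (hk : k < p / 2) : sin (D * (2 * k + 1 : ℕ) * π / p) ≠ 0 := by
    have hndvd : ¬ p ∣ D * (2 * k + 1) := fun h =>
      absurd (Nat.le_of_dvd (by omega) (hD.dvd_of_dvd_mul_left h)) (by omega)
    have := (sin_int_mul_pi_div_eq_zero_iff hp0 (D * (2 * k + 1) : ℕ)).not.mpr
      (by exact_mod_cast hndvd)
    push_cast at this ⊢
    exact this
  rw [sum_congr rfl fun (σ : ℕ) _ => mul_div_assoc (sin (σ * π / 2) ^ 2) _ _,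
    sum_Icc_sin_sq_mul_pi_div_two_mul hp, sum_congr rfl fun k hk =>
      sin_div_sin_eq_neg_one_pow_mul_sum_cos hp0 hab (odd_two_mul_add_one k)
        (hsin k (mem_range.mp hk)),
    ← mul_sum, sum_comm, sum_congr rfl fun j hj =>
      sum_range_cos_mul_odd_mul_pi_div hp hD ha.le (mem_range.mp hj),
    sum_range_ite_two_mul_add_one_eq]
  split_ifs
  · field_simp
  · simp

theorem typeA_three_point_coupling_formula_general
    (p q : ℕ) (hpe : Even p) (hqo : Odd q)
    (hqp : q < p) (hgcd : Nat.gcd p q = 1) :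
    ∀ r : ℕ, 1 ≤ r → r ≤ p - 1 →
      ((Even r →
        (2 / (p : ℝ)) * ∑ σ ∈ Finset.Icc 1 (p - 1),
          (Real.sin (σ * Real.pi / 2)) ^ 2 * Real.sin (r * σ * Real.pi / p) /
            Real.sin ((p - q : ℕ) * σ * Real.pi / p) = 0)
      ∧ (Odd r → ∀ a : ℕ, 1 ≤ a → a ≤ p - 1 → a * (p - q) ≡ r [MOD p] →
        (2 / (p : ℝ)) * ∑ σ ∈ Finset.Icc 1 (p - 1),
          (Real.sin (σ * Real.pi / 2)) ^ 2 * Real.sin (r * σ * Real.pi / p) /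
            Real.sin ((p - q : ℕ) * σ * Real.pi / p)
          = (-1 : ℝ) ^ ((a * (p - q) - r) / p))) := by
  intro r _ hrp
  have hD : Nat.Coprime p (p - q) := (Nat.coprime_self_sub_right hqp.le).mpr hgcd
  have hDodd : Odd (p - q) := Nat.Even.sub_odd hqp.le hpe hqo
  have hr : r < p := by omega
  refine ⟨fun hre => ?_, fun hro a _ hap hmod => ?_⟩
  · obtain ⟨a, ha, hmod⟩ := Nat.exists_mul_mod_eq_of_coprime r hD.symm (by omega)
    rw [mul_comm] at hmod
    have hab := eq_add_div_mul_of_modEq hmod hr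
    have ha_even : ¬ Odd a :=
      (odd_iff_odd_of_mul_eq_add_mul hpe hDodd hab).not.mpr (Nat.not_odd_iff_even.mpr hre)
    rw [coupling_sum_eq hpe hD ha hab, if_neg ha_even, mul_zero]
  · have hab := eq_add_div_mul_of_modEq hmod hr
    have ha_odd : Odd a := (odd_iff_odd_of_mul_eq_add_mul hpe hDodd hab).mpr hro
    rw [coupling_sum_eq hpe hD (by omega) hab, if_pos ha_odd, mul_one,
      Nat.sub_eq_of_eq_add' hab, Nat.mul_div_cancel _ (by omega)]

/-- eq. (4.2)/(C.2) of the paper. Let `p ≥ 4` be an even integer and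
`q` an odd integer with `0 < q < p` and `gcd(p, q) = 1`. For `1 ≤ r ≤ p - 1` set
`C(r) := (2/p) ∑_{σ=1}^{p-1} sin(σπ/2)^2 · sin(rσπ/p) / sin((p-q)σπ/p)`
(the `A_{p-1}` RSOS three-point coupling `C_{p/2, p/2, r}`). Then:
(i) if `r` is even, `C(r) = 0`;
(ii) if `r` is odd and `a` satisfies `1 ≤ a ≤ p - 1` and `a(p-q) ≡ r (mod p)`,
then with `b := (a(p-q) - r)/p` one has `C(r) = (-1)^b`. -/
theorem typeA_three_point_coupling_formula
    (p q : ℕ) (hp4 : 4 ≤ p) (hpe : Even p) (hqo : Odd q)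
    (hq0 : 0 < q) (hqp : q < p) (hgcd : Nat.gcd p q = 1) :
    ∀ r : ℕ, 1 ≤ r → r ≤ p - 1 →
      ((Even r →
        (2 / (p : ℝ)) * ∑ σ ∈ Finset.Icc 1 (p - 1),
          (Real.sin (σ * Real.pi / 2)) ^ 2 * Real.sin (r * σ * Real.pi / p) /
            Real.sin ((p - q : ℕ) * σ * Real.pi / p) = 0)
      ∧ (Odd r → ∀ a : ℕ, 1 ≤ a → a ≤ p - 1 → a * (p - q) ≡ r [MOD p] →
        (2 / (p : ℝ)) * ∑ σ ∈ Finset.Icc 1 (p - 1),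
          (Real.sin (σ * Real.pi / 2)) ^ 2 * Real.sin (r * σ * Real.pi / p) /
            Real.sin ((p - q : ℕ) * σ * Real.pi / p)
          = (-1 : ℝ) ^ ((a * (p - q) - r) / p))) :=
  typeA_three_point_coupling_formula_general p q hpe hqo hqp hgcd
end

section
/- Let p > 2 be an integer with p ≡ 2 (mod 4), and let q be an odd integer with 0 < q < p and gcd(p, q) = 1. Set ζ := exp(iπ(p−q)/p) ∈ ℂ. Then for every integer m, ζ^{2m} + ζ^{−2m} ≠ 0, and for every integer l ≥ 1 one has ∑_{a=1, a odd}^{p−1} (−1)^{(a−1)/2} (ζ^a + ζ^{−a})^{2l} = 2 · ∑_{m=−l}^{l} binom(2l, l+m) / (ζ^{2m} + ζ^{−2m}). -/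
/-!
Expanding `(ζ^a + ζ^(-a))^(2l)` binomially and exchanging the sums reduces the identity to the
inner sums `∑_{a odd} (-1)^((a-1)/2) x^a` with `x = ζ^(2m)`. Such a sum is `x` times a geometric
series in `-x²` with the odd number `p/2` of terms, so `x^p = 1` makes it
`2x/(1+x²) = 2/(x+x⁻¹)`.
The denominators are nonzero because `ζ^(4m) = -1` would force `4m(p-q) = (2n+1)p`, which is
impossible for `p ≡ 2 (mod 4)`.
-/

open Finset

lemma add_inv_pow_two_mul_eq_sum_Icc {K : Type*} [Field K] {y : K} (hy : y ≠ 0) (l : ℕ) :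
    (y + y⁻¹) ^ (2 * l)
      = ∑ m ∈ Icc (-(l : ℤ)) l, ((2 * l).choose ((l : ℤ) + m).toNat : K) * y ^ (2 * m) := by
  rw [add_pow]
  refine sum_nbij' (fun k => (k : ℤ) - l) (fun m => ((l : ℤ) + m).toNat) ?_ ?_ ?_ ?_ ?_
  all_goals try (intro k hk; simp only [mem_range, mem_Icc] at hk ⊢; omega)
  intro k hk
  rw [mem_range] at hk
  have hexp : y ^ k * y⁻¹ ^ (2 * l - k) = y ^ (2 * ((k : ℤ) - l)) := by
    rw [inv_pow, ← zpow_natCast, ← zpow_natCast, ← zpow_neg, ← zpow_add₀ hy]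
    congr 1
    push_cast [Nat.cast_sub (by omega : k ≤ 2 * l)]
    ring
  rw [hexp, show ((l : ℤ) + ((k : ℤ) - l)).toNat = k by omega, mul_comm]

lemma sum_filter_odd_range_eq_sum_range_div_two {M : Type*} [AddCommMonoid M] (p : ℕ)
    (f : ℕ → M) :
    ∑ a ∈ (range p).filter Odd, f a = ∑ j ∈ range (p / 2), f (2 * j + 1) := by
  refine sum_nbij' (· / 2) (2 * · + 1) ?_ ?_ ?_ ?_ ?_
  all_goals intro a ha; simp only [mem_filter, mem_range, Nat.odd_iff] at ha ⊢
  all_goals try omega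
  congr 1; omega

lemma sum_odd_neg_one_pow_mul_pow {K : Type*} [Field K] {p : ℕ} (hp : p % 4 = 2) {y : K}
    (hy : y ^ p = 1) (hy' : y + y⁻¹ ≠ 0) :
    ∑ a ∈ (range p).filter Odd, (-1 : K) ^ ((a - 1) / 2) * y ^ a = 2 / (y + y⁻¹) := by
  have hy0 : y ≠ 0 := ne_zero_pow (by omega) (hy ▸ one_ne_zero)
  have hsq : 1 + y ^ 2 ≠ 0 := by
    contrapose! hy'; field_simp; linear_combination hy'
  rw [sum_filter_odd_range_eq_sum_range_div_two]
  have hterm : ∀ j, (-1 : K) ^ ((2 * j + 1 - 1) / 2) * y ^ (2 * j + 1) = y * (-y ^ 2) ^ j := by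
    intro j
    rw [show (2 * j + 1 - 1) / 2 = j by omega, neg_pow, pow_succ, pow_mul]
    ring
  have hgeom : (-y ^ 2) ^ (p / 2) = -1 := by
    have hodd : Odd (p / 2) := Nat.odd_iff.mpr (by omega)
    rw [hodd.neg_pow, ← pow_mul, show 2 * (p / 2) = p by omega, hy]
  have hgeom_sum := geom_sum_mul (-y ^ 2) (p / 2)
  rw [hgeom] at hgeom_sum
  simp only [hterm, ← mul_sum]
  field_simp
  rw [eq_div_iff (by rwa [add_comm])]
  linear_combination -hgeom_sum

lemma sq_eq_neg_one_of_add_inv_eq_zero {K : Type*} [Field K] {y : K} (hy : y ≠ 0)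
    (h : y + y⁻¹ = 0) : y ^ 2 = -1 := by
  field_simp at h
  linear_combination h

theorem sum_odd_neg_one_pow_mul_add_zpow_neg_pow {K : Type*} [Field K] {p : ℕ}
    (hp : p % 4 = 2) {ζ : K} (hζ : ζ ^ p = -1)
    (hne : ∀ m : ℤ, ζ ^ (2 * m) + ζ ^ (-(2 * m)) ≠ 0) (l : ℕ) :
    ∑ a ∈ (range p).filter Odd,
        (-1 : K) ^ ((a - 1) / 2) * (ζ ^ (a : ℤ) + ζ ^ (-(a : ℤ))) ^ (2 * l)
      = 2 * ∑ m ∈ Icc (-(l : ℤ)) l,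
          ((2 * l).choose ((l : ℤ) + m).toNat : K) / (ζ ^ (2 * m) + ζ ^ (-(2 * m))) := by
  have hζ0 : ζ ≠ 0 := ne_zero_pow (by omega) (hζ ▸ neg_ne_zero.mpr one_ne_zero)
  have hpow : ∀ m : ℤ, (ζ ^ (2 * m)) ^ p = 1 := fun m => by
    rw [← zpow_natCast, ← zpow_mul, mul_comm, zpow_mul, zpow_natCast, hζ,
      (even_two_mul m).neg_one_zpow]
  calc _ = ∑ a ∈ (range p).filter Odd, ∑ m ∈ Icc (-(l : ℤ)) l,
          ((2 * l).choose ((l : ℤ) + m).toNat : K) *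
            ((-1) ^ ((a - 1) / 2) * (ζ ^ (2 * m)) ^ a) := by
        refine sum_congr rfl fun a _ => ?_
        rw [zpow_neg, add_inv_pow_two_mul_eq_sum_Icc (zpow_ne_zero _ hζ0), mul_sum]
        refine sum_congr rfl fun m _ => ?_
        rw [← zpow_mul, mul_comm (a : ℤ), zpow_mul, zpow_natCast]
        ring
    _ = ∑ m ∈ Icc (-(l : ℤ)) l, ((2 * l).choose ((l : ℤ) + m).toNat : K) *
          ∑ a ∈ (range p).filter Odd, (-1) ^ ((a - 1) / 2) * (ζ ^ (2 * m)) ^ a := by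
        rw [sum_comm]
        simp_rw [mul_sum]
    _ = _ := by
        rw [mul_sum]
        refine sum_congr rfl fun m _ => ?_
        rw [sum_odd_neg_one_pow_mul_pow hp (hpow m) (zpow_neg ζ (2 * m) ▸ hne m), zpow_neg]
        ring

open Complex Real in
lemma exp_I_mul_pi_mul_div_pow_eq_neg_one {k : ℤ} (hk : Odd k) {p : ℕ} (hp : p ≠ 0) :
    exp (I * π * k / p) ^ p = -1 := by
  rw [← Complex.exp_nat_mul, show (p : ℂ) * (I * π * k / p) = k * (π * I) by field_simp,
    exp_int_mul, exp_pi_mul_I, hk.neg_one_zpow]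

open Complex Real in
lemma exp_I_mul_pi_mul_div_zpow_ne_neg_one {p : ℕ} (hp : p % 4 = 2) (k : ℤ) {j : ℤ}
    (hj : 4 ∣ j) : exp (I * π * k / p) ^ j ≠ -1 := by
  intro h
  rw [← exp_int_mul, ← exp_pi_mul_I, exp_eq_exp_iff_exists_int] at h
  obtain ⟨n, hn⟩ := h
  have hp0 : (p : ℂ) ≠ 0 := by exact_mod_cast (by omega : p ≠ 0)
  have hC : (j * k : ℂ) = (2 * n + 1) * p := by
    field_simp at hn
    linear_combination hn
  have hZ : j * k = (2 * n + 1) * p := by exact_mod_cast hC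
  obtain ⟨s, rfl⟩ := hj
  obtain ⟨t, ht⟩ : ∃ t : ℤ, (p : ℤ) = 4 * t + 2 := ⟨p / 4, by omega⟩
  -- linear in the products `s * k` and `n * t`, so `omega` sees the contradiction mod 4
  have hlin : 4 * (s * k) = 4 * t + 2 + 8 * (n * t) + 4 * n := by
    rw [ht] at hZ
    linear_combination hZ
  omega

theorem typeD_multiplicity_rewriting_general
    (p q : ℕ) (hmod : p % 4 = 2) (hqo : Odd q)
    (ζ : ℂ) (hζ : ζ = Complex.exp (Complex.I * Real.pi * ((p : ℂ) - q) / p)) :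
    (∀ m : ℤ, ζ ^ (2 * m) + ζ ^ (-(2 * m)) ≠ 0)
    ∧ ∀ l : ℕ, 1 ≤ l →
      ∑ a ∈ (Finset.range p).filter (fun a => Odd a),
        (-1 : ℂ) ^ ((a - 1) / 2) * (ζ ^ (a : ℤ) + ζ ^ (-(a : ℤ))) ^ (2 * l)
      = 2 * ∑ m ∈ Finset.Icc (-(l : ℤ)) (l : ℤ),
          ((2 * l).choose ((l : ℤ) + m).toNat : ℂ) / (ζ ^ (2 * m) + ζ ^ (-(2 * m))) := by
  obtain ⟨r, rfl⟩ := hqo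
  have hk : Odd ((p : ℤ) - (2 * r + 1 : ℕ)) := ⟨(p / 2 : ℕ) - r - 1, by omega⟩
  replace hζ :
      ζ = Complex.exp (Complex.I * Real.pi * ((p - (2 * r + 1 : ℕ) : ℤ) : ℂ) / p) := by
    rw [hζ]; push_cast; rfl
  have hζp : ζ ^ p = -1 := hζ ▸ exp_I_mul_pi_mul_div_pow_eq_neg_one hk (by omega)
  have hne : ∀ m : ℤ, ζ ^ (2 * m) + ζ ^ (-(2 * m)) ≠ 0 := fun m h => by
    have hsq := sq_eq_neg_one_of_add_inv_eq_zero (zpow_ne_zero _ (hζ ▸ Complex.exp_ne_zero _))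
      (zpow_neg ζ (2 * m) ▸ h)
    rw [← zpow_natCast, ← zpow_mul, hζ] at hsq
    exact exp_I_mul_pi_mul_div_zpow_ne_neg_one hmod _ ⟨m, by push_cast; ring⟩ hsq
  exact ⟨hne, fun l _ => sum_odd_neg_one_pow_mul_add_zpow_neg_pow hmod hζp hne l⟩

/-- eq. (4.29) of the paper. Let `p > 2` with `p ≡ 2 (mod 4)`, and let
`q` be an odd integer with `0 < q < p` and `gcd(p, q) = 1`. Set `ζ := exp(iπ(p-q)/p)`.
Then `ζ^(2m) + ζ^(-2m) ≠ 0` for every integer `m`, and for every integer `l ≥ 1`,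
`∑_{a=1, a odd}^{p-1} (-1)^((a-1)/2) (ζ^a + ζ^(-a))^(2l)
  = 2 ∑_{m=-l}^{l} binom(2l, l+m) / (ζ^(2m) + ζ^(-2m))`. -/
theorem typeD_multiplicity_rewriting
    (p q : ℕ) (hp2 : 2 < p) (hmod : p % 4 = 2) (hqo : Odd q)
    (hq0 : 0 < q) (hqp : q < p) (hgcd : Nat.gcd p q = 1)
    (ζ : ℂ) (hζ : ζ = Complex.exp (Complex.I * Real.pi * ((p : ℂ) - q) / p)) :
    (∀ m : ℤ, ζ ^ (2 * m) + ζ ^ (-(2 * m)) ≠ 0)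
    ∧ ∀ l : ℕ, 1 ≤ l →
      ∑ a ∈ (Finset.range p).filter (fun a => Odd a),
        (-1 : ℂ) ^ ((a - 1) / 2) * (ζ ^ (a : ℤ) + ζ ^ (-(a : ℤ))) ^ (2 * l)
      = 2 * ∑ m ∈ Finset.Icc (-(l : ℤ)) (l : ℤ),
          ((2 * l).choose ((l : ℤ) + m).toNat : ℂ) / (ζ ^ (2 * m) + ζ ^ (-(2 * m))) :=
  typeD_multiplicity_rewriting_general p q hmod hqo ζ hζ
end

section
/- Let z be a nonzero complex number, set Q := (z + z^{−1})^2, and assume Q ≠ 0, z^2 + z^{−2} ≠ 0 (equivalently Q ≠ 2), z^4 + z^{−4} ≠ 0 (equivalently Q^2 − 4Q + 2 ≠ 0) and z^6 + z^{−6} ≠ 0 (equivalently (Q − 2)(Q^2 − 4Q + 1) ≠ 0). Then (2/Q^3) · ∑_{m=−3}^{3} binom(6, 3+m) / (z^{2m} + z^{−2m}) = 4(5Q^2 − 35Q + 61) / ((Q − 2)(Q^2 − 4Q + 2)(Q^2 − 4Q + 1)). -/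
open Finset

/-!
With `w = z²` one has `z^(2m) + z^(-2m) = C_m(w + w⁻¹)`, where `C_m` is the rescaled Chebyshev
(Vieta–Lucas) polynomial, and `w + w⁻¹ = Q - 2`. The sum is therefore
`10 + 30 / C₁ + 12 / C₂ + 2 / C₃` evaluated at `Q - 2`, with `C₁ = Q - 2`, `C₂ = Q² - 4Q + 2` and
`C₃ = (Q - 2)(Q² - 4Q + 1)`, and clearing denominators leaves a polynomial identity in `Q`.
-/

theorem Finset.sum_Icc_neg_three_three {M : Type*} [AddCommMonoid M] (f : ℤ → M) :
    ∑ m ∈ Icc (-3 : ℤ) 3, f m = f (-3) + f (-2) + f (-1) + f 0 + f 1 + f 2 + f 3 := by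
  rw [Int.Icc_eq_finset_map]
  simp [sum_range_succ]

namespace Polynomial.Chebyshev

theorem C_three (R : Type*) [CommRing R] : C R 3 = X ^ 3 - 3 * X := by
  rw [show (3 : ℤ) = 1 + 2 by norm_num, C_add_two, one_add_one_eq_two, C_two, C_one]
  ring

theorem C_eval_add_inv {K : Type*} [Field K] {x : K} (hx : x ≠ 0) (n : ℤ) :
    (C K n).eval (x + x⁻¹) = x ^ n + x ^ (-n) := by
  induction n using Polynomial.Chebyshev.induct' with
  | zero => norm_num
  | one => simp
  | add_two n ih1 ih0 =>
    rw [C_add_two, eval_sub, eval_mul, eval_X, ih1, ih0]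
    simp only [zpow_neg, zpow_add₀ hx, zpow_one, zpow_natCast]
    field_simp
    ring
  | neg n ih => rw [C_neg, ih, neg_neg, add_comm]

theorem C_eval_add_inv_sq_sub_two {K : Type*} [Field K] {z : K} (hz : z ≠ 0) (m : ℤ) :
    (C K m).eval ((z + z⁻¹) ^ 2 - 2) = z ^ (2 * m) + z ^ (-(2 * m)) := by
  have hw : (z + z⁻¹) ^ 2 - 2 = z ^ 2 + (z ^ 2)⁻¹ := by
    field_simp
    ring
  rw [hw, C_eval_add_inv (pow_ne_zero 2 hz), zpow_neg, zpow_neg, zpow_mul]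
  norm_cast

variable {R : Type*} [CommRing R]

theorem C_two_eval_sub_two (Q : R) : (C R 2).eval (Q - 2) = Q ^ 2 - 4 * Q + 2 := by
  simp only [C_two, eval_sub, eval_pow, eval_X, eval_ofNat]
  ring

theorem C_three_eval_sub_two (Q : R) :
    (C R 3).eval (Q - 2) = (Q - 2) * (Q ^ 2 - 4 * Q + 1) := by
  simp only [C_three, eval_sub, eval_mul, eval_pow, eval_X, eval_ofNat]
  ring

end Polynomial.Chebyshev

open Polynomial Polynomial.Chebyshev

theorem two_div_cube_mul_sum_choose_div_C_eval {K : Type*} [Field K] [CharZero K] {Q : K}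
    (hQ : Q ≠ 0) (h1 : Q - 2 ≠ 0) (h2 : Q ^ 2 - 4 * Q + 2 ≠ 0) (h3 : Q ^ 2 - 4 * Q + 1 ≠ 0) :
    (2 / Q ^ 3) * ∑ m ∈ Icc (-3 : ℤ) 3, (Nat.choose 6 (3 + m).toNat : K) / (C K m).eval (Q - 2)
      = 4 * (5 * Q ^ 2 - 35 * Q + 61) /
        ((Q - 2) * (Q ^ 2 - 4 * Q + 2) * (Q ^ 2 - 4 * Q + 1)) := by
  rw [sum_Icc_neg_three_three]
  simp only [Int.reduceNeg, Int.reduceAdd, add_neg_cancel, Int.toNat_zero, Int.toNat_one,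
    Int.reduceToNat, Nat.choose, Nat.choose_zero_right, Nat.choose_one_right, Nat.choose_self,
    Nat.choose_succ_self_right, Nat.reduceAdd, add_zero, Nat.cast_one, Nat.cast_ofNat, C_neg, C_zero,
    C_one, eval_X, eval_ofNat, C_two_eval_sub_two, C_three_eval_sub_two]
  -- as atoms, the quadratic factors survive `field_simp`, which would otherwise expand them
  generalize hA : Q ^ 2 - 4 * Q + 2 = A at h2 ⊢
  generalize hB : Q ^ 2 - 4 * Q + 1 = B at h3 ⊢
  field_simp
  rw [← hA, ← hB]
  ring

/-- eq. (4.31c) of the paper. Let `z` be a nonzero complex number, set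
`Q := (z + z⁻¹)^2`, and assume `Q ≠ 0`, `z^2 + z^(-2) ≠ 0` (equivalently `Q ≠ 2`),
`z^4 + z^(-4) ≠ 0` (equivalently `Q^2 - 4Q + 2 ≠ 0`) and `z^6 + z^(-6) ≠ 0`
(equivalently `(Q - 2)(Q^2 - 4Q + 1) ≠ 0`). Then
`(2/Q^3) ∑_{m=-3}^{3} binom(6, 3+m) / (z^(2m) + z^(-2m))
  = 4(5Q^2 - 35Q + 61)/((Q - 2)(Q^2 - 4Q + 2)(Q^2 - 4Q + 1))`. -/
theorem typeD_multiplicity_k6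
    (z : ℂ) (hz : z ≠ 0) (Q : ℂ) (hQdef : Q = (z + z⁻¹) ^ 2)
    (hQ0 : Q ≠ 0) (h2 : z ^ (2 : ℤ) + z ^ (-2 : ℤ) ≠ 0)
    (h4 : z ^ (4 : ℤ) + z ^ (-4 : ℤ) ≠ 0)
    (h6 : z ^ (6 : ℤ) + z ^ (-6 : ℤ) ≠ 0) :
    (2 / Q ^ 3) * ∑ m ∈ Finset.Icc (-3 : ℤ) 3,
      ((Nat.choose 6 ((3 : ℤ) + m).toNat : ℂ)) / (z ^ (2 * m) + z ^ (-(2 * m)))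
    = 4 * (5 * Q ^ 2 - 35 * Q + 61) /
        ((Q - 2) * (Q ^ 2 - 4 * Q + 2) * (Q ^ 2 - 4 * Q + 1)) := by
  have hC (m : ℤ) : (C ℂ m).eval (Q - 2) = z ^ (2 * m) + z ^ (-(2 * m)) :=
    hQdef ▸ C_eval_add_inv_sq_sub_two hz m
  have h1' : Q - 2 ≠ 0 := by simpa using (hC 1).trans_ne h2
  have h2' : Q ^ 2 - 4 * Q + 2 ≠ 0 := C_two_eval_sub_two Q ▸ (hC 2).trans_ne h4
  have h3' : Q ^ 2 - 4 * Q + 1 ≠ 0 :=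
    right_ne_zero_of_mul (C_three_eval_sub_two Q ▸ (hC 3).trans_ne h6)
  simp only [← hC]
  exact two_div_cube_mul_sum_choose_div_C_eval hQ0 h1' h2' h3'
end

section
/- For every integer l ≥ 1 one has ∑_{m=−l}^{l} binom(2l, l+m) / cos(mπ/3) = 2 · 3^l, where cos(mπ/3) ≠ 0 for every integer m. -/
open Finset

/-- Reindexing of a sum over `Icc (-l) l` to `range (2l+1)`. -/
lemma sum_Icc_reindex {M : Type*} [AddCommMonoid M] (l : ℕ) (f : ℤ → M) :
    ∑ m ∈ Finset.Icc (-(l : ℤ)) (l : ℤ), f m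
      = ∑ k ∈ Finset.range (2 * l + 1), f ((k : ℤ) - l) := by
  refine Finset.sum_bij' (fun m _ => (m + l).toNat) (fun k _ => (k : ℤ) - l) ?_ ?_ ?_ ?_ ?_
  · intro m hm
    simp only [Finset.mem_Icc] at hm
    simp only [Finset.mem_range]
    omega
  · intro k hk
    simp only [Finset.mem_range] at hk
    simp only [Finset.mem_Icc]
    omega
  · intro m hm
    simp only [Finset.mem_Icc] at hm
    omega
  · intro k hk
    simp only [Finset.mem_range] at hk
    omega
  · intro m hm
    simp only [Finset.mem_Icc] at hm
    congr 1
    omega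

lemma sum_Icc_binom {K : Type*} [Field K] (l : ℕ) (z : K) (hz : z ≠ 0) :
    ∑ m ∈ Finset.Icc (-(l : ℤ)) (l : ℤ),
      ((2 * l).choose ((l : ℤ) + m).toNat : K) * z ^ m
      = z ^ (-(l : ℤ)) * (z + 1) ^ (2 * l) := by
  rw [sum_Icc_reindex]
  have hterm : ∀ k ∈ Finset.range (2 * l + 1),
      ((2 * l).choose ((l : ℤ) + ((k : ℤ) - l)).toNat : K) * z ^ ((k : ℤ) - (l : ℤ))
        = (z ^ (-(l : ℤ))) * (z ^ k * 1 ^ (2 * l - k) * ((2 * l).choose k : K)) := by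
    intro k hk
    have h1 : ((l : ℤ) + ((k : ℤ) - l)).toNat = k := by omega
    rw [h1, sub_eq_add_neg, zpow_add₀ hz, zpow_natCast]
    ring
  rw [Finset.sum_congr rfl hterm, ← Finset.mul_sum, ← add_pow z 1 (2 * l)]

noncomputable def omg : ℂ := Complex.exp (Real.pi * Complex.I / 3)

lemma omg_ne : omg ≠ 0 := Complex.exp_ne_zero _

lemma omg_eq : omg = (1 / 2 : ℝ) + (Real.sqrt 3 / 2 : ℝ) * Complex.I := by
  have h : (Real.pi : ℂ) * Complex.I / 3 = ((Real.pi / 3 : ℝ) : ℂ) * Complex.I := by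
    push_cast; ring
  rw [omg, h, Complex.exp_mul_I]
  rw [show Complex.cos ((Real.pi / 3 : ℝ) : ℂ) = ((Real.cos (Real.pi / 3) : ℝ) : ℂ) by
    rw [Complex.ofReal_cos]]
  rw [show Complex.sin ((Real.pi / 3 : ℝ) : ℂ) = ((Real.sin (Real.pi / 3) : ℝ) : ℂ) by
    rw [Complex.ofReal_sin]]
  rw [Real.cos_pi_div_three, Real.sin_pi_div_three]

lemma omg_add_one_sq : (omg + 1) ^ 2 = 3 * omg := by
  have h3 : (Real.sqrt 3 : ℂ) ^ 2 = 3 := by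
    rw [← Complex.ofReal_pow, Real.sq_sqrt (by norm_num : (0:ℝ) ≤ 3)]
    norm_num
  rw [omg_eq]
  push_cast
  ring_nf
  rw [Complex.I_sq]
  ring_nf
  rw [h3]
  ring

lemma omg_zpow_re (m : ℤ) : (omg ^ m).re = Real.cos (m * Real.pi / 3) := by
  have h1 : omg ^ m = Complex.exp ((m : ℂ) * (Real.pi * Complex.I / 3)) := by
    rw [Complex.exp_int_mul, omg]
  have h2 : (m : ℂ) * (Real.pi * Complex.I / 3) = ((m * Real.pi / 3 : ℝ) : ℂ) * Complex.I := by
    push_cast; ring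
  rw [h1, h2, Complex.exp_ofReal_mul_I_re]

lemma sum_complex (l : ℕ) :
    ∑ m ∈ Finset.Icc (-(l : ℤ)) (l : ℤ),
      ((2 * l).choose ((l : ℤ) + m).toNat : ℂ) * omg ^ m = 3 ^ l := by
  rw [sum_Icc_binom l omg omg_ne]
  rw [show 2 * l = l * 2 from by ring, pow_mul', omg_add_one_sq, mul_pow]
  rw [← mul_assoc, mul_comm (omg ^ (-(l:ℤ))) ((3:ℂ) ^ l), mul_assoc]
  rw [← zpow_natCast omg l, ← zpow_add₀ omg_ne]
  simp

lemma sum_cos (l : ℕ) :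
    ∑ m ∈ Finset.Icc (-(l : ℤ)) (l : ℤ),
      ((2 * l).choose ((l : ℤ) + m).toNat : ℝ) * Real.cos (m * Real.pi / 3) = 3 ^ l := by
  have h := congrArg Complex.re (sum_complex l)
  rw [Complex.re_sum] at h
  have h2 : ∀ m ∈ Finset.Icc (-(l : ℤ)) (l : ℤ),
      (((2 * l).choose ((l : ℤ) + m).toNat : ℂ) * omg ^ m).re
        = ((2 * l).choose ((l : ℤ) + m).toNat : ℝ) * Real.cos (m * Real.pi / 3) := by
    intro m _
    rw [show ((2 * l).choose ((l : ℤ) + m).toNat : ℂ)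
        = (((2 * l).choose ((l : ℤ) + m).toNat : ℝ) : ℂ) by push_cast; ring,
      Complex.re_ofReal_mul, omg_zpow_re]
  rw [Finset.sum_congr rfl h2] at h
  rw [h]
  rw [show ((3:ℂ)) = ((3:ℝ):ℂ) by norm_num, ← Complex.ofReal_pow, Complex.ofReal_re]

lemma sum_alt (l : ℕ) (hl : 1 ≤ l) :
    ∑ m ∈ Finset.Icc (-(l : ℤ)) (l : ℤ),
      ((2 * l).choose ((l : ℤ) + m).toNat : ℝ) * Real.cos (m * Real.pi) = 0 := by
  have hcos : ∀ m : ℤ, Real.cos ((m : ℝ) * Real.pi) = (-1 : ℝ) ^ m := by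
    intro m
    have := Real.cos_add_int_mul_pi 0 m
    simpa using this
  have h2 : ∀ m ∈ Finset.Icc (-(l : ℤ)) (l : ℤ),
      ((2 * l).choose ((l : ℤ) + m).toNat : ℝ) * Real.cos (m * Real.pi)
        = ((2 * l).choose ((l : ℤ) + m).toNat : ℝ) * (-1 : ℝ) ^ m := by
    intro m _; rw [hcos m]
  rw [Finset.sum_congr rfl h2, sum_Icc_binom l (-1 : ℝ) (by norm_num)]
  rw [show ((-1 : ℝ) + 1) = 0 by ring, zero_pow (by omega : 2 * l ≠ 0), mul_zero]

lemma cos_ne_and_inv (m : ℤ) :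
    Real.cos ((m : ℝ) * Real.pi / 3) ≠ 0 ∧
    (1 : ℝ) / Real.cos ((m : ℝ) * Real.pi / 3)
      = 2 * Real.cos ((m : ℝ) * Real.pi / 3) - Real.cos ((m : ℝ) * Real.pi) := by
  obtain ⟨q, r, hr, hm⟩ :
      ∃ q r : ℤ, (r = 0 ∨ r = 1 ∨ r = 2 ∨ r = 3 ∨ r = 4 ∨ r = 5) ∧ m = 6 * q + r :=
    ⟨m / 6, m % 6, by omega, by omega⟩
  subst hm
  have e1 : ((6 * q + r : ℤ) : ℝ) * Real.pi / 3
      = (r : ℝ) * Real.pi / 3 + (q : ℤ) * (2 * Real.pi) := by push_cast; ring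
  have e2 : ((6 * q + r : ℤ) : ℝ) * Real.pi
      = (r : ℝ) * Real.pi + ((3 * q : ℤ) : ℝ) * (2 * Real.pi) := by push_cast; ring
  rw [e1, Real.cos_add_int_mul_two_pi, e2, Real.cos_add_int_mul_two_pi]
  rcases hr with h | h | h | h | h | h <;> subst h <;> push_cast
  · rw [show (0 : ℝ) * Real.pi / 3 = 0 by ring, show (0 : ℝ) * Real.pi = 0 by ring,
      Real.cos_zero]
    norm_num
  · rw [show (1 : ℝ) * Real.pi / 3 = Real.pi / 3 by ring, Real.cos_pi_div_three,
      show (1 : ℝ) * Real.pi = Real.pi by ring, Real.cos_pi]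
    norm_num
  · rw [show (2 : ℝ) * Real.pi / 3 = Real.pi - Real.pi / 3 by ring, Real.cos_pi_sub,
      Real.cos_pi_div_three,
      show (2 : ℝ) * Real.pi = 2 * Real.pi - 0 by ring, Real.cos_two_pi_sub, Real.cos_zero]
    norm_num
  · rw [show (3 : ℝ) * Real.pi / 3 = Real.pi by ring, Real.cos_pi,
      show (3 : ℝ) * Real.pi = 2 * Real.pi - -Real.pi by ring, Real.cos_two_pi_sub,
      Real.cos_neg, Real.cos_pi]
    norm_num
  · rw [show (4 : ℝ) * Real.pi / 3 = 2 * Real.pi - (Real.pi - Real.pi / 3) by ring,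
      Real.cos_two_pi_sub, Real.cos_pi_sub, Real.cos_pi_div_three,
      show (4 : ℝ) * Real.pi = 0 + (2 : ℤ) * (2 * Real.pi) by push_cast; ring,
      Real.cos_add_int_mul_two_pi, Real.cos_zero]
    norm_num
  · rw [show (5 : ℝ) * Real.pi / 3 = 2 * Real.pi - Real.pi / 3 by ring,
      Real.cos_two_pi_sub, Real.cos_pi_div_three,
      show (5 : ℝ) * Real.pi = Real.pi + (2 : ℤ) * (2 * Real.pi) by push_cast; ring,
      Real.cos_add_int_mul_two_pi, Real.cos_pi]
    norm_num

/-- eq. (6.9) of the paper. For every integer `l ≥ 1`,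
`∑_{m=-l}^{l} binom(2l, l+m) / cos(mπ/3) = 2 · 3^l`, where `cos(mπ/3) ≠ 0` for every
integer `m`. -/
theorem sum_binom_div_cos_pi_div_three
    (l : ℕ) (hl : 1 ≤ l) :
    (∀ m : ℤ, Real.cos (m * Real.pi / 3) ≠ 0) ∧
    ∑ m ∈ Finset.Icc (-(l : ℤ)) (l : ℤ),
      ((2 * l).choose ((l : ℤ) + m).toNat : ℝ) / Real.cos (m * Real.pi / 3)
    = 2 * 3 ^ l := by
  refine ⟨fun m => (cos_ne_and_inv m).1, ?_⟩
  have h2 : ∀ m ∈ Finset.Icc (-(l : ℤ)) (l : ℤ),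
      ((2 * l).choose ((l : ℤ) + m).toNat : ℝ) / Real.cos (m * Real.pi / 3)
        = 2 * (((2 * l).choose ((l : ℤ) + m).toNat : ℝ) * Real.cos (m * Real.pi / 3))
          - ((2 * l).choose ((l : ℤ) + m).toNat : ℝ) * Real.cos (m * Real.pi) := by
    intro m _
    have h := (cos_ne_and_inv m).2
    have : ((2 * l).choose ((l : ℤ) + m).toNat : ℝ) / Real.cos (m * Real.pi / 3)
        = ((2 * l).choose ((l : ℤ) + m).toNat : ℝ) * (1 / Real.cos (m * Real.pi / 3)) := by
      ring
    rw [this, h]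
    ring
  rw [Finset.sum_congr rfl h2, Finset.sum_sub_distrib, ← Finset.mul_sum,
    sum_cos l, sum_alt l hl, sub_zero]
end

section
/- Let p > 2 be an integer with p ≡ 2 (mod 4), and let q be an odd integer with 0 < q < p and gcd(p, q) = 1. Set ζ := exp(iπ(p−q)/p), and for each integer a set Q_a := (ζ^a + ζ^{−a})^2, writing Q := Q_1. Then Q ≠ 0, Q ≠ 1, Q_2 ≠ Q, and Q_2 ≠ Q_a for every odd a with 1 ≤ a ≤ p − 1, and one has the cancellation identity ∑_{a=1, a odd}^{p−1} (−1)^{(a−1)/2} · Q_a / (Q_2 − Q_a) = Q(Q − 1) / (Q_2 − Q); equivalently, 1 + ((Q_2 − Q)/(Q(1 − Q))) · ∑_{a=1, a odd}^{p−1} (−1)^{(a−1)/2} Q_a/(Q_2 − Q_a) = 0. -/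
/-!
Put `w := ζ ^ 2`, a primitive `p`-th root of unity with `p = 2m`, `m` odd; then
`Q_a = w ^ a + 2 + w⁻ᵃ`. Partial fractions in `z = w ^ a` reduce the sum to the alternating sums
`F α = ∑_{k<m} (-1)^k / (w^(2k+1) - α)` at `α = w^(±2)`. Shifting `k` by one multiplies the nodes
`w^(2k+1)` by `w²` and flips the sign, up to a boundary term coming from `w^(2m-1) = w⁻¹`:
`F (w² α) = w⁻² (2 / (w⁻¹ - α) - F α)`. Used at `α = w⁻²` and at `α = 1`, this eliminates `F 1`
and evaluates the combination `w⁻² F (w⁻²) - w² F (w²)` that occurs.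
-/

open Finset

theorem sum_range_two_mul_filter_odd {M : Type*} [AddCommMonoid M] (f : ℕ → M) (m : ℕ) :
    ∑ a ∈ range (2 * m) with Odd a, f a = ∑ k ∈ range m, f (2 * k + 1) := by
  induction m with
  | zero => simp
  | succ n ih =>
    rw [show 2 * (n + 1) = 2 * n + 1 + 1 by ring, range_add_one, range_add_one, filter_insert,
      filter_insert, if_pos (odd_two_mul_add_one n), if_neg (by simp [Nat.not_odd_iff_even]),
      sum_insert (by simp), ih, sum_range_succ, add_comm]

section

variable {K : Type*} [Field K]

/-- `pottsWeight (x ^ 2) = (x + x⁻¹) ^ 2`, so the paper's `Q_a` is `pottsWeight (ζ ^ (2 * a))`. -/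
def pottsWeight (z : K) : K := z + 2 + z⁻¹

theorem add_inv_sq_eq_pottsWeight {x : K} (hx : x ≠ 0) :
    (x + x⁻¹) ^ 2 = pottsWeight (x ^ 2) := by
  rw [pottsWeight]; field_simp; ring

theorem pottsWeight_sub_pottsWeight {u z : K} (hu : u ≠ 0) (hz : z ≠ 0) :
    pottsWeight u - pottsWeight z = -((z - u) * (z - u⁻¹)) / z := by
  rw [pottsWeight, pottsWeight]
  field_simp
  ring

theorem inv_pottsWeight_sub_pottsWeight {u z : K} (hz : z ≠ 0) (hzu : z ≠ u) (hzu' : z ≠ u⁻¹)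
    (hu : u ≠ u⁻¹) :
    (pottsWeight u - pottsWeight z)⁻¹ = (u⁻¹ / (z - u⁻¹) - u / (z - u)) / (u - u⁻¹) := by
  have hu0 : u ≠ 0 := by rintro rfl; simp at hu
  have h1 : z - u ≠ 0 := sub_ne_zero.2 hzu
  have h2 : z - u⁻¹ ≠ 0 := sub_ne_zero.2 hzu'
  have h3 : u - u⁻¹ ≠ 0 := sub_ne_zero.2 hu
  rw [pottsWeight_sub_pottsWeight hu0 hz]
  -- the identity holds with any `v ≠ u` in place of `u⁻¹`; `field_simp` should not see `u⁻¹`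
  generalize u⁻¹ = v at *
  field_simp
  ring

def altOddSum (m : ℕ) (w α : K) : K := ∑ k ∈ range m, (-1) ^ k / (w ^ (2 * k + 1) - α)

theorem altOddSum_sq_mul {m : ℕ} (hm : Odd m) {w : K} (hw : w ^ (2 * m) = 1) (α : K) :
    altOddSum m w (w ^ 2 * α) = (w ^ 2)⁻¹ * (2 / (w⁻¹ - α) - altOddSum m w α) := by
  obtain ⟨n, rfl⟩ : ∃ n, m = n + 1 := ⟨m - 1, by have := hm.pos; omega⟩
  have hw0 : w ≠ 0 := by rintro rfl; simp at hw
  have hn : Even n := by simpa [Nat.odd_add_one, Nat.not_odd_iff_even] using hm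
  have hlast : w ^ (2 * n + 1) = w⁻¹ := by
    refine eq_inv_of_mul_eq_one_left ?_
    rw [← pow_succ, ← hw]; ring
  have hshift : ∀ k, (-1 : K) ^ (k + 1) / (w ^ (2 * (k + 1) + 1) - w ^ 2 * α)
      = -(w ^ 2)⁻¹ * ((-1) ^ k / (w ^ (2 * k + 1) - α)) := by
    intro k
    rw [show w ^ (2 * (k + 1) + 1) - w ^ 2 * α = w ^ 2 * (w ^ (2 * k + 1) - α) by ring,
      pow_succ]
    field_simp
  have hfirst :
      (-1 : K) ^ 0 / (w ^ (2 * 0 + 1) - w ^ 2 * α) = (w ^ 2)⁻¹ * (1 / (w⁻¹ - α)) := by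
    rw [show w ^ (2 * 0 + 1) - w ^ 2 * α = w ^ 2 * (w⁻¹ - α) by field_simp; ring]
    simp [mul_comm]
  rw [altOddSum, altOddSum, sum_range_succ', sum_range_succ, hlast, hn.neg_one_pow, hfirst]
  simp_rw [hshift, ← mul_sum]
  ring

theorem inv_sq_mul_altOddSum_sub {m : ℕ} (hm : Odd m) {w : K} (hw : w ^ (2 * m) = 1)
    (hw1 : w ≠ 1) :
    (w ^ 2)⁻¹ * altOddSum m w (w ^ 2)⁻¹ - w ^ 2 * altOddSum m w (w ^ 2)
      = 2 * (w + 1) / (w - 1) := by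
  have hw0 : w ≠ 0 := by rintro rfl; simp [hm.pos.ne'] at hw
  have h1 := altOddSum_sq_mul hm hw (w ^ 2)⁻¹
  have h2 := altOddSum_sq_mul hm hw 1
  rw [mul_inv_cancel₀ (pow_ne_zero 2 hw0)] at h1
  rw [mul_one, h1] at h2
  rw [h2]
  have : w - 1 ≠ 0 := sub_ne_zero.2 hw1
  field_simp
  ring

namespace IsPrimitiveRoot

variable {w : K} {m : ℕ}

theorem zpow_ne_one_of_odd (hw : IsPrimitiveRoot w (2 * m)) {t : ℤ} (ht : Odd t) :
    w ^ t ≠ 1 := by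
  rw [Ne, hw.zpow_eq_one_iff_dvd]
  intro h
  exact Int.not_even_iff_odd.2 ht (even_iff_two_dvd.2 (dvd_trans ⟨m, by push_cast; ring⟩ h))

theorem zpow_ne_zpow_of_odd_sub (hw : IsPrimitiveRoot w (2 * m)) (hm : m ≠ 0) {a b : ℤ}
    (hab : Odd (a - b)) : w ^ a ≠ w ^ b := by
  intro h
  apply hw.zpow_ne_one_of_odd hab
  rw [zpow_sub₀ (hw.ne_zero (by omega)), h, div_self (zpow_ne_zero _ (hw.ne_zero (by omega)))]

theorem pow_ne_sq_of_odd (hw : IsPrimitiveRoot w (2 * m)) (hm : m ≠ 0) {a : ℕ} (ha : Odd a) :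
    w ^ a ≠ w ^ 2 := by
  have h := hw.zpow_ne_zpow_of_odd_sub hm (a := a) (b := 2) (by
    obtain ⟨k, rfl⟩ := ha; exact ⟨k - 1, by push_cast; ring⟩)
  rwa [zpow_natCast, zpow_ofNat] at h

theorem pow_ne_inv_sq_of_odd (hw : IsPrimitiveRoot w (2 * m)) (hm : m ≠ 0) {a : ℕ}
    (ha : Odd a) : w ^ a ≠ (w ^ 2)⁻¹ := by
  have h := hw.zpow_ne_zpow_of_odd_sub hm (a := a) (b := -2) (by
    obtain ⟨k, rfl⟩ := ha; exact ⟨k + 1, by push_cast; ring⟩)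
  rwa [zpow_natCast, zpow_neg, zpow_ofNat] at h

theorem pottsWeight_sq_ne_pottsWeight_pow (hw : IsPrimitiveRoot w (2 * m)) (hm : m ≠ 0) {a : ℕ}
    (ha : Odd a) : pottsWeight (w ^ 2) ≠ pottsWeight (w ^ a) := by
  have hw0 : w ≠ 0 := hw.ne_zero (by omega)
  rw [Ne, ← sub_eq_zero, pottsWeight_sub_pottsWeight (pow_ne_zero 2 hw0) (pow_ne_zero a hw0)]
  exact div_ne_zero (neg_ne_zero.2 (mul_ne_zero (sub_ne_zero.2 (hw.pow_ne_sq_of_odd hm ha))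
    (sub_ne_zero.2 (hw.pow_ne_inv_sq_of_odd hm ha)))) (pow_ne_zero a hw0)

theorem pow_four_ne_one (hw : IsPrimitiveRoot w (2 * m)) (hm : Odd m) (hm1 : 1 < m) :
    w ^ 4 ≠ 1 :=
  hw.pow_ne_one_of_pos_of_lt four_ne_zero (by obtain ⟨j, rfl⟩ := hm; omega)

theorem pottsWeight_ne_zero (hw : IsPrimitiveRoot w (2 * m)) (hm : 1 < m) :
    pottsWeight w ≠ 0 := by
  have hw0 : w ≠ 0 := hw.ne_zero (by omega)
  have hw1 : w + 1 ≠ 0 := by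
    intro h
    exact hw.pow_ne_one_of_pos_of_lt two_ne_zero (by omega)
      (by rw [eq_neg_of_add_eq_zero_left h]; ring)
  rw [show pottsWeight w = (w + 1) ^ 2 / w by rw [pottsWeight]; field_simp; ring]
  exact div_ne_zero (pow_ne_zero 2 hw1) hw0

theorem pottsWeight_ne_one (hw : IsPrimitiveRoot w (2 * m)) (hm : 1 < m) :
    pottsWeight w ≠ 1 := by
  have hw0 : w ≠ 0 := hw.ne_zero (by omega)
  intro h
  apply hw.pow_ne_one_of_pos_of_lt three_ne_zero (by omega)
  have : w ^ 2 + w + 1 = 0 := by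
    rw [pottsWeight] at h
    field_simp at h
    linear_combination h
  linear_combination (w - 1) * this

theorem sum_neg_one_pow_div_pottsWeight_sub (hw : IsPrimitiveRoot w (2 * m)) (hm : Odd m)
    (hm1 : 1 < m) :
    ∑ k ∈ range m, (-1) ^ k / (pottsWeight (w ^ 2) - pottsWeight (w ^ (2 * k + 1)))
      = 2 * (w + 1) / (w - 1) / (w ^ 2 - (w ^ 2)⁻¹) := by
  have hw0 : w ≠ 0 := hw.ne_zero (by omega)
  have hw1 : w ≠ 1 := by simpa using hw.pow_ne_one_of_pos_of_lt one_ne_zero (by omega)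
  have hsq : w ^ 2 ≠ (w ^ 2)⁻¹ := by
    intro h
    apply hw.pow_four_ne_one hm hm1
    rw [show 4 = 2 + 2 from rfl, pow_add]
    nth_rewrite 1 [h]
    exact inv_mul_cancel₀ (pow_ne_zero 2 hw0)
  calc ∑ k ∈ range m, (-1) ^ k / (pottsWeight (w ^ 2) - pottsWeight (w ^ (2 * k + 1)))
      = ∑ k ∈ range m, ((w ^ 2)⁻¹ * ((-1) ^ k / (w ^ (2 * k + 1) - (w ^ 2)⁻¹))
          - w ^ 2 * ((-1) ^ k / (w ^ (2 * k + 1) - w ^ 2))) / (w ^ 2 - (w ^ 2)⁻¹) := by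
        refine sum_congr rfl fun k _ => ?_
        have hk : Odd (2 * k + 1) := odd_two_mul_add_one k
        rw [div_eq_mul_inv, inv_pottsWeight_sub_pottsWeight (pow_ne_zero _ hw0)
          (hw.pow_ne_sq_of_odd (by omega) hk) (hw.pow_ne_inv_sq_of_odd (by omega) hk) hsq]
        ring
    _ = ((w ^ 2)⁻¹ * altOddSum m w (w ^ 2)⁻¹ - w ^ 2 * altOddSum m w (w ^ 2))
          / (w ^ 2 - (w ^ 2)⁻¹) := by
        rw [← sum_div, sum_sub_distrib, ← mul_sum, ← mul_sum, altOddSum, altOddSum]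
    _ = 2 * (w + 1) / (w - 1) / (w ^ 2 - (w ^ 2)⁻¹) := by
        rw [inv_sq_mul_altOddSum_sub hm hw.pow_eq_one hw1]

theorem sum_neg_one_pow_mul_pottsWeight_div (hw : IsPrimitiveRoot w (2 * m)) (hm : Odd m)
    (hm1 : 1 < m) :
    ∑ k ∈ range m, (-1) ^ k * pottsWeight (w ^ (2 * k + 1))
        / (pottsWeight (w ^ 2) - pottsWeight (w ^ (2 * k + 1)))
      = pottsWeight w * (pottsWeight w - 1) / (pottsWeight (w ^ 2) - pottsWeight w) := by
  have hw0 : w ≠ 0 := hw.ne_zero (by omega)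
  have hw1 : w - 1 ≠ 0 :=
    sub_ne_zero.2 (by simpa using hw.pow_ne_one_of_pos_of_lt one_ne_zero (by omega))
  have hw4 : w ^ 4 - 1 ≠ 0 := sub_ne_zero.2 (hw.pow_four_ne_one hm hm1)
  have hQ : pottsWeight (w ^ 2) - pottsWeight w ≠ 0 :=
    sub_ne_zero.2 (by simpa using hw.pottsWeight_sq_ne_pottsWeight_pow (a := 1) (by omega) odd_one)
  calc ∑ k ∈ range m, (-1) ^ k * pottsWeight (w ^ (2 * k + 1))
        / (pottsWeight (w ^ 2) - pottsWeight (w ^ (2 * k + 1)))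
      = -∑ k ∈ range m, (-1 : K) ^ k + pottsWeight (w ^ 2) *
          ∑ k ∈ range m, (-1) ^ k / (pottsWeight (w ^ 2) - pottsWeight (w ^ (2 * k + 1))) := by
        rw [mul_sum, ← sum_neg_distrib, ← sum_add_distrib]
        refine sum_congr rfl fun k _ => ?_
        have := sub_ne_zero.2
          (hw.pottsWeight_sq_ne_pottsWeight_pow (by omega) (odd_two_mul_add_one k))
        field_simp
        ring
    _ = -1 + pottsWeight (w ^ 2) * (2 * (w + 1) / (w - 1) / (w ^ 2 - (w ^ 2)⁻¹)) := by
        rw [neg_one_geom_sum, if_neg (Nat.not_even_iff_odd.2 hm),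
          hw.sum_neg_one_pow_div_pottsWeight_sub hm hm1]
    _ = pottsWeight w * (pottsWeight w - 1) / (pottsWeight (w ^ 2) - pottsWeight w) := by
        rw [eq_div_iff hQ]
        simp only [pottsWeight]
        field_simp
        ring

end IsPrimitiveRoot

end

theorem typeD_W21_amplitude_cancellation_general
    (p q : ℕ) (hp2 : 2 < p) (hmod : p % 4 = 2)
    (hqp : q < p) (hgcd : Nat.gcd p q = 1)
    (ζ : ℂ) (hζ : ζ = Complex.exp (Complex.I * Real.pi * ((p : ℂ) - q) / p))
    (Qa : ℕ → ℂ) (hQa : ∀ a : ℕ, Qa a = (ζ ^ (a : ℤ) + ζ ^ (-(a : ℤ))) ^ 2) :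
    Qa 1 ≠ 0 ∧ Qa 1 ≠ 1 ∧ Qa 2 ≠ Qa 1 ∧
    (∀ a ∈ (Finset.range p).filter (fun a => Odd a), Qa 2 ≠ Qa a) ∧
    (∑ a ∈ (Finset.range p).filter (fun a => Odd a),
        (-1 : ℂ) ^ ((a - 1) / 2) * Qa a / (Qa 2 - Qa a)
      = Qa 1 * (Qa 1 - 1) / (Qa 2 - Qa 1)) ∧
    (1 + (Qa 2 - Qa 1) / (Qa 1 * (1 - Qa 1)) *
        ∑ a ∈ (Finset.range p).filter (fun a => Odd a),
          (-1 : ℂ) ^ ((a - 1) / 2) * Qa a / (Qa 2 - Qa a)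
      = 0) := by
  obtain ⟨m, rfl⟩ : ∃ m, p = 2 * m := ⟨p / 2, by omega⟩
  have hm : Odd m := Nat.odd_iff.2 (by omega)
  have hm1 : 1 < m := by omega
  have hw : IsPrimitiveRoot (ζ ^ 2) (2 * m) := by
    convert Complex.isPrimitiveRoot_exp_of_coprime (2 * m - q) (2 * m) (by omega)
      ((Nat.coprime_self_sub_left hqp.le).2 (Nat.coprime_comm.1 hgcd)) using 1
    rw [hζ, ← Complex.exp_nat_mul]
    push_cast [Nat.cast_sub hqp.le]
    ring_nf
  have hQ : ∀ a, Qa a = pottsWeight ((ζ ^ 2) ^ a) := by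
    intro a
    rw [hQa, zpow_neg, zpow_natCast, add_inv_sq_eq_pottsWeight (pow_ne_zero _ (by simp [hζ])),
      ← pow_mul, ← pow_mul, mul_comm]
  have hQ0 : Qa 1 ≠ 0 := by simpa [hQ] using hw.pottsWeight_ne_zero hm1
  have hQ1 : Qa 1 ≠ 1 := by simpa [hQ] using hw.pottsWeight_ne_one hm1
  have hQodd : ∀ a ∈ (range (2 * m)).filter (fun a => Odd a), Qa 2 ≠ Qa a := fun a ha => by
    simpa [hQ] using hw.pottsWeight_sq_ne_pottsWeight_pow (by omega) (mem_filter.1 ha).2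
  have hQ21 : Qa 2 ≠ Qa 1 := hQodd 1 (mem_filter.2 ⟨mem_range.2 (by omega), odd_one⟩)
  have hsum : ∑ a ∈ (range (2 * m)).filter (fun a => Odd a),
      (-1 : ℂ) ^ ((a - 1) / 2) * Qa a / (Qa 2 - Qa a) = Qa 1 * (Qa 1 - 1) / (Qa 2 - Qa 1) := by
    rw [sum_range_two_mul_filter_odd]
    simpa [hQ] using hw.sum_neg_one_pow_mul_pottsWeight_div hm hm1
  refine ⟨hQ0, hQ1, hQ21, hQodd, hsum, ?_⟩
  have h1 : 1 - Qa 1 ≠ 0 := sub_ne_zero.2 hQ1.symm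
  have h2 : Qa 2 - Qa 1 ≠ 0 := sub_ne_zero.2 hQ21
  rw [hsum]
  field_simp
  ring

/-- vanishing of the `W_{2,1}` amplitude, section 5.2 of the paper.
Let `p > 2` with `p ≡ 2 (mod 4)`, and `q` odd with `0 < q < p` and `gcd(p, q) = 1`.
Set `ζ := exp(iπ(p-q)/p)` and `Q_a := (ζ^a + ζ^(-a))^2`, with `Q := Q_1`. Then `Q ≠ 0`,
`Q ≠ 1`, `Q_2 ≠ Q`, `Q_2 ≠ Q_a` for every odd `a` with `1 ≤ a ≤ p - 1`, and
`∑_{a=1, a odd}^{p-1} (-1)^((a-1)/2) Q_a/(Q_2 - Q_a) = Q(Q - 1)/(Q_2 - Q)`;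
equivalently
`1 + ((Q_2 - Q)/(Q(1 - Q))) ∑_{a odd} (-1)^((a-1)/2) Q_a/(Q_2 - Q_a) = 0`. -/
theorem typeD_W21_amplitude_cancellation
    (p q : ℕ) (hp2 : 2 < p) (hmod : p % 4 = 2) (hqo : Odd q)
    (hq0 : 0 < q) (hqp : q < p) (hgcd : Nat.gcd p q = 1)
    (ζ : ℂ) (hζ : ζ = Complex.exp (Complex.I * Real.pi * ((p : ℂ) - q) / p))
    (Qa : ℕ → ℂ) (hQa : ∀ a : ℕ, Qa a = (ζ ^ (a : ℤ) + ζ ^ (-(a : ℤ))) ^ 2) :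
    Qa 1 ≠ 0 ∧ Qa 1 ≠ 1 ∧ Qa 2 ≠ Qa 1 ∧
    (∀ a ∈ (Finset.range p).filter (fun a => Odd a), Qa 2 ≠ Qa a) ∧
    (∑ a ∈ (Finset.range p).filter (fun a => Odd a),
        (-1 : ℂ) ^ ((a - 1) / 2) * Qa a / (Qa 2 - Qa a)
      = Qa 1 * (Qa 1 - 1) / (Qa 2 - Qa 1)) ∧
    (1 + (Qa 2 - Qa 1) / (Qa 1 * (1 - Qa 1)) *
        ∑ a ∈ (Finset.range p).filter (fun a => Odd a),
          (-1 : ℂ) ^ ((a - 1) / 2) * Qa a / (Qa 2 - Qa a)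
      = 0) :=
  typeD_W21_amplitude_cancellation_general p q hp2 hmod hqp hgcd ζ hζ Qa hQa
end
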